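/- arXiv:1411.1865 — 8 statements merged into one kernel-verified Lean document; each statement's English description precedes it below -/
import Mathlib

section
/- Let ξ be a probability distribution on ℕ with ℙ(ξ = 1) < 1 and mean 𝔼[ξ] ≤ 1. Then the Galton–Watson tree with offspring distribution ξ is almost surely finite. -/
open MeasureTheory ProbabilityTheory
open scoped ENNReal NNReal

/-!
Let `F = pgf μ` and `q = μ {0}`. The size of generation `n` is measurable with respect to the
offspring numbers of earlier generations, hence independent of those of generation `n`;
conditioning on it gives `𝔼[s ^ Z (n + 1)] = 𝔼[F s ^ Z n]`, so `ℙ (Z n = 0) = F^[n] 0`.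
Writing `k = 1_{k ≠ 0} + (k - 1)` and using `𝔼[ξ] ≤ 1` gives `1 - F s ≤ (1 - s) (1 - q + q s)`,
and `μ {1} < 1` forces `q > 0`. So if `F^[n] 0 ≤ c < 1` for all `n`, the defect `1 - F^[n] 0`
would shrink by the factor `1 - q + q c < 1` at each step and tend to `0`, contradicting
`1 - F^[n] 0 ≥ 1 - c`.
-/

noncomputable def pgf (μ : Measure ℕ) (s : ℝ≥0∞) : ℝ≥0∞ :=
  ∫⁻ k, s ^ k ∂μ

-- `1 - s ^ (j + 1) = (1 - s) (1 + s + ⋯ + s ^ j)` and `s ^ i ≤ s` for `i ≥ 1`, when `s ≤ 1`.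
lemma one_le_pow_succ_add_one_sub_mul (s : ℝ≥0∞) (j : ℕ) :
    1 ≤ s ^ (j + 1) + (1 - s) * (1 + j * s) := by
  rcases le_or_gt 1 s with hs | hs
  · exact (one_le_pow₀ hs).trans le_self_add
  induction j with
  | zero => simp [add_tsub_cancel_of_le hs.le]
  | succ j ih =>
    have hss : s * s ≤ s := mul_le_of_le_one_left' hs.le
    calc 1 = s + (1 - s) := (add_tsub_cancel_of_le hs.le).symm
      _ ≤ s * (s ^ (j + 1) + (1 - s) * (1 + j * s)) + (1 - s) := by
        gcongr; exact le_mul_of_one_le_right' ih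
      _ = s ^ (j + 2) + (1 - s) * (1 + s + j * (s * s)) := by ring
      _ ≤ s ^ (j + 2) + (1 - s) * (1 + s + j * s) := by gcongr
      _ = s ^ (j + 1 + 1) + (1 - s) * (1 + ↑(j + 1) * s) := by push_cast; ring

section OffspringDistribution

variable {μ : Measure ℕ} [IsProbabilityMeasure μ]

lemma lintegral_sub_one_le_measure_zero (hmean : ∫⁻ k, (k : ℝ≥0∞) ∂μ ≤ 1) :
    ∫⁻ k, ((k - 1 : ℕ) : ℝ≥0∞) ∂μ ≤ μ {0} := by
  have hsplit : ∫⁻ k, (k : ℝ≥0∞) ∂μ = ∫⁻ k, ((k - 1 : ℕ) : ℝ≥0∞) ∂μ + μ {0}ᶜ := by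
    rw [← lintegral_indicator_one (measurableSet_singleton 0).compl,
      ← lintegral_add_left Measurable.of_discrete]
    congr with k
    rcases k with _ | k <;> simp
  refine ENNReal.le_of_add_le_add_right (measure_ne_top μ {0}ᶜ) ?_
  rw [prob_add_prob_compl (measurableSet_singleton 0), ← hsplit]
  exact hmean

lemma measure_singleton_zero_pos (h1 : μ {1} < 1) (hmean : ∫⁻ k, (k : ℝ≥0∞) ∂μ ≤ 1) :
    0 < μ {0} := by
  refine pos_iff_ne_zero.2 fun h0 => h1.ne ?_
  have hpred : ∀ᵐ k ∂μ, ((k - 1 : ℕ) : ℝ≥0∞) = 0 :=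
    (lintegral_eq_zero_iff Measurable.of_discrete).1
      (le_zero_iff.1 (h0 ▸ lintegral_sub_one_le_measure_zero hmean))
  have hne : ∀ᵐ k ∂μ, k ∉ ({0} : Set ℕ) := measure_eq_zero_iff_ae_notMem.1 h0
  rw [← prob_compl_eq_zero_iff (measurableSet_singleton 1), measure_eq_zero_iff_ae_notMem]
  filter_upwards [hpred, hne] with k hk hk0
  simp only [Set.mem_compl_iff, Set.mem_singleton_iff, not_not, Nat.cast_eq_zero] at hk hk0 ⊢
  omega

lemma one_le_pgf_add_one_sub_mul (hmean : ∫⁻ k, (k : ℝ≥0∞) ∂μ ≤ 1) (s : ℝ≥0∞) :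
    1 ≤ pgf μ s + (1 - s) * (1 - μ {0} + μ {0} * s) := by
  have hpointwise : ∀ k : ℕ,
      1 ≤ s ^ k + (1 - s) * (({0}ᶜ : Set ℕ).indicator 1 k + ((k - 1 : ℕ) : ℝ≥0∞) * s) := by
    rintro (_ | j)
    · simp
    · simpa using one_le_pow_succ_add_one_sub_mul s j
  calc 1 = ∫⁻ _, 1 ∂μ := by simp
    _ ≤ ∫⁻ k, s ^ k + (1 - s) * (({0}ᶜ : Set ℕ).indicator 1 k + ((k - 1 : ℕ) : ℝ≥0∞) * s) ∂μ :=
      lintegral_mono hpointwise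
    _ = pgf μ s + (1 - s) * (μ {0}ᶜ + (∫⁻ k, ((k - 1 : ℕ) : ℝ≥0∞) ∂μ) * s) := by
      rw [pgf, lintegral_add_left Measurable.of_discrete,
        lintegral_const_mul _ Measurable.of_discrete, lintegral_add_left Measurable.of_discrete,
        lintegral_mul_const _ Measurable.of_discrete,
        lintegral_indicator_one (measurableSet_singleton 0).compl]
    _ ≤ pgf μ s + (1 - s) * (1 - μ {0} + μ {0} * s) := by
      rw [prob_compl_eq_one_sub (measurableSet_singleton 0)]
      gcongr
      exact lintegral_sub_one_le_measure_zero hmean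

end OffspringDistribution

lemma one_le_iSup_iterate {f : ℝ≥0∞ → ℝ≥0∞} {q : ℝ≥0∞} (hq0 : 0 < q) (hq1 : q ≤ 1)
    (hf : ∀ s, 1 ≤ f s + (1 - s) * (1 - q + q * s)) (x : ℝ≥0∞) : 1 ≤ ⨆ n, f^[n] x := by
  by_contra! hc
  set c := ⨆ n, f^[n] x
  set r := 1 - q + q * c
  have hr : r < 1 :=
    calc r < 1 - q + q * 1 := ENNReal.add_lt_add_left (ENNReal.sub_ne_top ENNReal.one_ne_top)
          (ENNReal.mul_lt_mul_right hq0.ne' (ne_top_of_le_ne_top ENNReal.one_ne_top hq1) hc)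
      _ = 1 := by rw [mul_one, tsub_add_cancel_of_le hq1]
  have hdecay : ∀ n, 1 - f^[n] x ≤ r ^ n := by
    intro n
    induction n with
    | zero => simp
    | succ n ih =>
      rw [Function.iterate_succ_apply', pow_succ]
      calc 1 - f (f^[n] x) ≤ (1 - f^[n] x) * (1 - q + q * f^[n] x) :=
            tsub_le_iff_left.2 (hf _)
        _ ≤ r ^ n * (1 - q + q * c) := by gcongr; exact le_iSup (fun n => f^[n] x) n
  have : 1 - c ≤ 0 := ge_of_tendsto' (ENNReal.tendsto_pow_atTop_nhds_zero_of_lt_one hr)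
    fun n => (tsub_le_tsub_left (le_iSup (fun n => f^[n] x) n) 1).trans (hdecay n)
  exact (tsub_pos_of_lt hc).ne' (le_zero_iff.1 this)

section RandomIndex

variable {Ω : Type*} {mΩ : MeasurableSpace Ω} {P : Measure Ω}

lemma lintegral_comp_eq_tsum_setLIntegral {X : Ω → ℕ} (hX : Measurable X) (f : ℕ → Ω → ℝ≥0∞) :
    ∫⁻ ω, f (X ω) ω ∂P = ∑' k, ∫⁻ ω in X ⁻¹' {k}, f k ω ∂P := by
  have hcover : ⋃ k, X ⁻¹' {k} = Set.univ := by
    ext ω; simp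
  rw [← setLIntegral_univ, ← hcover, lintegral_iUnion (fun k => hX (measurableSet_singleton k))
    fun k l hkl => (Set.disjoint_singleton.2 hkl).preimage X]
  exact tsum_congr fun k => setLIntegral_congr_fun (hX (measurableSet_singleton k))
    fun ω hω => by rw [show X ω = k from hω]

lemma lintegral_comp_eq_of_indep {m₁ m₂ : MeasurableSpace Ω} (h₁ : m₁ ≤ mΩ) (h₂ : m₂ ≤ mΩ)
    (hind : Indep m₁ m₂ P) {X : Ω → ℕ} (hX : Measurable[m₁] X) {Y : ℕ → Ω → ℝ≥0∞}
    (hY : ∀ k, Measurable[m₂] (Y k)) :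
    ∫⁻ ω, Y (X ω) ω ∂P = ∫⁻ ω, (∫⁻ ω', Y (X ω) ω' ∂P) ∂P := by
  have hXm : Measurable[mΩ] X := hX.mono h₁ le_rfl
  rw [lintegral_comp_eq_tsum_setLIntegral hXm Y,
    lintegral_comp_eq_tsum_setLIntegral hXm fun k _ => ∫⁻ ω', Y k ω' ∂P]
  refine tsum_congr fun k => ?_
  have hset : MeasurableSet[m₁] (X ⁻¹' {k}) := hX (measurableSet_singleton k)
  rw [setLIntegral_const, ← lintegral_indicator (h₁ _ hset), ← lintegral_indicator_one (h₁ _ hset),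
    mul_comm, ← lintegral_mul_eq_lintegral_mul_lintegral_of_independent_measurableSpace h₁ h₂ hind
      ((@measurable_one _ _ _ m₁ _).indicator hset) (hY k)]
  congr with ω
  by_cases hω : ω ∈ X ⁻¹' {k} <;> simp [hω]

lemma lintegral_zero_pow {X : Ω → ℕ} (hX : Measurable X) :
    ∫⁻ ω, (0 : ℝ≥0∞) ^ X ω ∂P = P (X ⁻¹' {0}) := by
  rw [← lintegral_indicator_one (hX (measurableSet_singleton 0))]
  congr with ω
  by_cases hω : X ω = 0 <;> simp [hω]

end RandomIndex

namespace GaltonWatson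

variable {Ω : Type*} {mΩ : MeasurableSpace Ω} {P : Measure Ω} {ξ : ℕ → ℕ → Ω → ℕ}

abbrev offspringSigma (ξ : ℕ → ℕ → Ω → ℕ) (S : Set (ℕ × ℕ)) : MeasurableSpace Ω :=
  ⨆ p ∈ S, MeasurableSpace.comap (ξ p.1 p.2) inferInstance

lemma offspringSigma_le (hmeas : ∀ n i, Measurable[mΩ] (ξ n i)) (S : Set (ℕ × ℕ)) :
    offspringSigma ξ S ≤ mΩ :=
  iSup₂_le fun p _ => (hmeas p.1 p.2).comap_le

lemma offspringSigma_mono {S T : Set (ℕ × ℕ)} (h : S ⊆ T) :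
    offspringSigma ξ S ≤ offspringSigma ξ T :=
  biSup_mono h

lemma measurable_offspringSigma {S : Set (ℕ × ℕ)} {n i : ℕ} (h : (n, i) ∈ S) :
    Measurable[offspringSigma ξ S] (ξ n i) :=
  (Measurable.of_comap_le le_rfl).mono
    (le_biSup (fun p : ℕ × ℕ => MeasurableSpace.comap (ξ p.1 p.2) inferInstance) h) le_rfl

lemma indep_offspringSigma (hmeas : ∀ n i, Measurable[mΩ] (ξ n i))
    (hindep : iIndepFun (fun p : ℕ × ℕ => ξ p.1 p.2) P) {S T : Set (ℕ × ℕ)} (h : Disjoint S T) :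
    Indep (offspringSigma ξ S) (offspringSigma ξ T) P :=
  (indep_iSup_of_disjoint (fun p => (hmeas p.1 p.2).comap_le) hindep.iIndep h :)

lemma lintegral_prod_pow_offspring {μ : Measure ℕ} (hmeas : ∀ n i, Measurable[mΩ] (ξ n i))
    (hindep : iIndepFun (fun p : ℕ × ℕ => ξ p.1 p.2) P) (hdist : ∀ n i, P.map (ξ n i) = μ)
    (s : ℝ≥0∞) (n k : ℕ) :
    ∫⁻ ω, ∏ i ∈ Finset.range k, s ^ ξ n i ω ∂P = pgf μ s ^ k := by
  have hpow : ∀ i, ∫⁻ ω, s ^ ξ n i ω ∂P = pgf μ s := fun i => by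
    rw [pgf, ← hdist n i, lintegral_map Measurable.of_discrete (hmeas n i)]
  have hind : iIndepFun (fun i ω => s ^ ξ n i ω) P :=
    (hindep.precomp (Prod.mk_right_injective n)).comp (fun _ j => s ^ j)
      fun _ => Measurable.of_discrete
  rw [lintegral_prod_eq_prod_lintegral_of_indepFun _ _ hind
    fun i => Measurable.of_discrete.comp (hmeas n i)]
  simp [hpow]

variable {Z : ℕ → Ω → ℕ}

lemma measurable_generationSize (hZ0 : ∀ ω, Z 0 ω = 1)
    (hZ : ∀ n ω, Z (n + 1) ω = ∑ i ∈ Finset.range (Z n ω), ξ n i ω) (n : ℕ) :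
    Measurable[offspringSigma ξ {p | p.1 < n}] (Z n) := by
  induction n with
  | zero => simp only [funext hZ0, measurable_const]
  | succ n ih =>
    let m := offspringSigma ξ {p : ℕ × ℕ | p.1 < n + 1}
    have hsum : Measurable[@Prod.instMeasurableSpace ℕ Ω _ m]
        fun q : ℕ × Ω => ∑ i ∈ Finset.range q.1, ξ n i q.2 :=
      measurable_from_prod_countable_right fun k =>
        Finset.measurable_sum (Finset.range k) fun i _ =>
          measurable_offspringSigma (ξ := ξ) (n := n) (i := i) (by simp)
    have hZn : Measurable[m] (Z n) :=
      ih.mono (offspringSigma_mono fun p (hp : p.1 < n) => (by simp; omega)) le_rfl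
    rw [funext (hZ n)]
    exact hsum.comp (hZn.prodMk measurable_id)

lemma lintegral_pow_generationSize_succ {μ : Measure ℕ}
    (hmeas : ∀ n i, Measurable[mΩ] (ξ n i)) (hindep : iIndepFun (fun p : ℕ × ℕ => ξ p.1 p.2) P)
    (hdist : ∀ n i, P.map (ξ n i) = μ) (hZ0 : ∀ ω, Z 0 ω = 1)
    (hZ : ∀ n ω, Z (n + 1) ω = ∑ i ∈ Finset.range (Z n ω), ξ n i ω) (s : ℝ≥0∞) (n : ℕ) :
    ∫⁻ ω, s ^ Z (n + 1) ω ∂P = ∫⁻ ω, pgf μ s ^ Z n ω ∂P := by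
  have hdisj : Disjoint {p : ℕ × ℕ | p.1 < n} {p | p.1 = n} :=
    Set.disjoint_left.2 fun p hlt heq => (ne_of_lt hlt) heq
  simp_rw [hZ n, ← Finset.prod_pow_eq_pow_sum]
  rw [lintegral_comp_eq_of_indep (offspringSigma_le hmeas _) (offspringSigma_le hmeas _)
    (indep_offspringSigma hmeas hindep hdisj) (measurable_generationSize hZ0 hZ n)
    (Y := fun k ω => ∏ i ∈ Finset.range k, s ^ ξ n i ω)
    fun k => Finset.measurable_prod _ fun i _ =>
      Measurable.of_discrete.comp (measurable_offspringSigma (ξ := ξ) (n := n) (i := i) rfl)]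
  simp_rw [lintegral_prod_pow_offspring hmeas hindep hdist]

lemma lintegral_pow_generationSize [IsProbabilityMeasure P] {μ : Measure ℕ}
    (hmeas : ∀ n i, Measurable[mΩ] (ξ n i)) (hindep : iIndepFun (fun p : ℕ × ℕ => ξ p.1 p.2) P)
    (hdist : ∀ n i, P.map (ξ n i) = μ) (hZ0 : ∀ ω, Z 0 ω = 1)
    (hZ : ∀ n ω, Z (n + 1) ω = ∑ i ∈ Finset.range (Z n ω), ξ n i ω) (n : ℕ) (s : ℝ≥0∞) :
    ∫⁻ ω, s ^ Z n ω ∂P = (pgf μ)^[n] s := by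
  induction n generalizing s with
  | zero => simp [hZ0]
  | succ n ih =>
    rw [lintegral_pow_generationSize_succ hmeas hindep hdist hZ0 hZ, ih,
      Function.iterate_succ_apply]

lemma measure_generationSize_eq_zero [IsProbabilityMeasure P] {μ : Measure ℕ}
    (hmeas : ∀ n i, Measurable[mΩ] (ξ n i)) (hindep : iIndepFun (fun p : ℕ × ℕ => ξ p.1 p.2) P)
    (hdist : ∀ n i, P.map (ξ n i) = μ) (hZ0 : ∀ ω, Z 0 ω = 1)
    (hZ : ∀ n ω, Z (n + 1) ω = ∑ i ∈ Finset.range (Z n ω), ξ n i ω) (n : ℕ) :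
    P (Z n ⁻¹' {0}) = (pgf μ)^[n] 0 := by
  rw [← lintegral_pow_generationSize hmeas hindep hdist hZ0 hZ, lintegral_zero_pow
    ((measurable_generationSize hZ0 hZ n).mono (offspringSigma_le hmeas _) le_rfl)]

end GaltonWatson

/-- A Galton–Watson branching process whose offspring distribution `μ` satisfies
`μ {1} < 1` and has mean at most `1` dies out almost surely; equivalently, the
Galton–Watson tree is almost surely finite. Here `ξ n i` is the offspring number of the
`i`-th individual in generation `n`, and `Z n` is the size of generation `n`. -/
theorem galtonWatson_extinction
    {Ω : Type*} [MeasureSpace Ω] [IsProbabilityMeasure (ℙ : Measure Ω)]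
    (μ : Measure ℕ) [IsProbabilityMeasure μ]
    (ξ : ℕ → ℕ → Ω → ℕ)
    (hmeas : ∀ n i, Measurable (ξ n i))
    (hindep : iIndepFun
      (fun p : ℕ × ℕ => ξ p.1 p.2) ℙ)
    (hdist : ∀ n i, Measure.map (ξ n i) ℙ = μ)
    (h1 : μ {1} < 1)
    (hmean : ∫⁻ k, (k : ℝ≥0∞) ∂μ ≤ 1)
    (Z : ℕ → Ω → ℕ)
    (hZ0 : ∀ ω, Z 0 ω = 1)
    (hZ : ∀ n ω, Z (n + 1) ω = ∑ i ∈ Finset.range (Z n ω), ξ n i ω) :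
    ℙ {ω | ∃ n, Z n ω = 0} = 1 := by
  refine le_antisymm prob_le_one ?_
  calc 1 ≤ ⨆ n, (pgf μ)^[n] 0 :=
        one_le_iSup_iterate (measure_singleton_zero_pos h1 hmean) prob_le_one
          (one_le_pgf_add_one_sub_mul hmean) 0
    _ = ⨆ n, ℙ (Z n ⁻¹' {0}) := by
        simp_rw [GaltonWatson.measure_generationSize_eq_zero hmeas hindep hdist hZ0 hZ]
    _ ≤ ℙ {ω | ∃ n, Z n ω = 0} := iSup_le fun n => measure_mono fun ω hω => ⟨n, hω⟩
end

section
/- Let ξ be a probability distribution on ℕ with mean 1 and finite nonzero variance σ², and let (ξᵢ) be i.i.d. copies of ξ. Then the probability that a ξ-Galton–Watson tree has exactly n vertices equals n⁻¹ · ℙ(ξ₁ + ⋯ + ξₙ = n − 1). -/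
open MeasureTheory ProbabilityTheory
open scoped ENNReal NNReal

/-!
Record a finite Galton–Watson tree generation by generation, as the table of the offspring
numbers of its individuals. Concatenating the rows (breadth-first order) is a bijection from the
tables of trees with `n` vertices onto the lists `l` of length `n` along which the walk
`1 + l[0] + ⋯ + l[t-1] - t` stays positive before time `n` and vanishes at time `n`. By
independence, the event that the tree has `n` vertices and the event `ξ₁ + ⋯ + ξₙ = n - 1` both
have as probability the sum of the weights `∏ₜ μ{l[t]}` of the corresponding lists. Cycle lemma:
of the `n` cyclic shifts of a list of length `n` and sum `n - 1` exactly one is a first-passage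
list, the one starting just after the first minimum of the walk; so the second sum is `n` times
the first.
-/

namespace GaltonWatson

/-- `ll[k]` lists the offspring numbers of the individuals of generation `k` of a forest with
`z` roots; the table stops at the first empty generation. -/
def IsGenerationTable : ℕ → List (List ℕ) → Prop
  | z, [] => z = 0
  | z, l :: ls => 0 < z ∧ l.length = z ∧ IsGenerationTable l.sum ls

def generationTables (z m : ℕ) : Set (List (List ℕ)) :=
  {ll | IsGenerationTable z ll ∧ ll.flatten.length = m}

/-- Lists of length `m` along which the walk `t ↦ z + l[0] + ⋯ + l[t-1] - t` stays positive
before time `m` and hits `0` at time `m`. -/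
def firstPassageLists (z m : ℕ) : Set (List ℕ) :=
  {l | l.length = m ∧ z + l.sum = m ∧ ∀ t < m, t < z + (l.take t).sum}

def listsWithSum (n s : ℕ) : Set (List ℕ) :=
  {l | l.length = n ∧ l.sum = s}

theorem flatten_injOn_generationTables (z : ℕ) :
    Set.InjOn List.flatten {ll | IsGenerationTable z ll} := by
  intro ll₁ h₁ ll₂ h₂ heq
  induction ll₁ generalizing z ll₂ with
  | nil => cases ll₂ with
    | nil => rfl
    | cons l ls => exact absurd h₁ h₂.1.ne'
  | cons l ls ih => cases ll₂ with
    | nil => exact absurd h₂ h₁.1.ne'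
    | cons l' ls' =>
      obtain ⟨rfl, hls⟩ := List.append_inj heq (h₁.2.1.trans h₂.2.1.symm)
      rw [ih l.sum h₁.2.2 h₂.2.2 hls]

theorem append_mem_firstPassageLists {l r : List ℕ} {m : ℕ}
    (hr : r ∈ firstPassageLists l.sum m) :
    l ++ r ∈ firstPassageLists l.length (l.length + m) := by
  obtain ⟨hlen, hsum, hpos⟩ := hr
  refine ⟨by simp [hlen], by simp [List.sum_append]; omega, fun t ht => ?_⟩
  rcases le_or_gt l.length t with h | h
  · obtain ⟨u, rfl⟩ := Nat.exists_eq_add_of_le h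
    have := hpos u (by omega)
    rw [List.take_length_add_append, List.sum_append]
    omega
  · omega

theorem drop_mem_firstPassageLists {l : List ℕ} {z m : ℕ} (hl : l ∈ firstPassageLists z m) :
    l.drop z ∈ firstPassageLists (l.take z).sum (m - z) := by
  obtain ⟨hlen, hsum, hpos⟩ := hl
  have hsplit := List.sum_take_add_sum_drop l z
  refine ⟨by simp [hlen], by omega, fun u hu => ?_⟩
  have := hpos (z + u) (by omega)
  rw [List.take_add, List.sum_append] at this
  omega

theorem image_flatten_generationTables (z m : ℕ) :
    List.flatten '' generationTables z m = firstPassageLists z m := by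
  ext l
  constructor
  · rintro ⟨ll, ⟨hll, rfl⟩, rfl⟩
    induction ll generalizing z with
    | nil =>
      obtain rfl : z = 0 := hll
      simp [firstPassageLists]
    | cons l ls ih =>
      obtain ⟨-, rfl, hls⟩ := hll
      simpa using append_mem_firstPassageLists (ih l.sum hls)
  · induction m using Nat.strong_induction_on generalizing z l with
    | _ m ih =>
      intro hl
      rcases Nat.eq_zero_or_pos z with rfl | hz
      · obtain rfl : m = 0 := by
          by_contra hm
          simpa using hl.2.2 0 (Nat.pos_of_ne_zero hm)
        exact ⟨[], ⟨rfl, rfl⟩, (List.length_eq_zero_iff.mp hl.1).symm⟩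
      · have hzm : z ≤ m := by have := hl.2.1; omega
        obtain ⟨ls, ⟨hls, hlen⟩, hflat⟩ :=
          ih (m - z) (by omega) _ _ (drop_mem_firstPassageLists hl)
        refine ⟨l.take z :: ls, ⟨⟨hz, by simp [hl.1, hzm], hls⟩, ?_⟩, ?_⟩
        · simp [hlen, hl.1, hzm]
        · simp [hflat]

theorem tsum_generationTables_eq_tsum_firstPassageLists (w : ℕ → ℝ≥0∞) (z m : ℕ) :
    ∑' ll : generationTables z m, (ll.1.flatten.map w).prod =
      ∑' l : firstPassageLists z m, (l.1.map w).prod := by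
  rw [← image_flatten_generationTables,
    tsum_image (fun l => (l.map w).prod)
      ((flatten_injOn_generationTables z).mono fun _ h => h.1)]

theorem sum_take_rotate_add_sum_take {l : List ℕ} {t s : ℕ} (h : t + s ≤ l.length) :
    ((l.rotate t).take s).sum + (l.take t).sum = (l.take (t + s)).sum := by
  rw [List.rotate_eq_drop_append_take (by omega),
    List.take_append_of_le_length (by simp; omega), List.take_add, List.sum_append, add_comm]

theorem sum_take_rotate_add_sum_take_of_lt {l : List ℕ} {t s : ℕ} (ht : t ≤ l.length)
    (hs : s ≤ l.length) (h : l.length < t + s) :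
    ((l.rotate t).take s).sum + (l.take t).sum = l.sum + (l.take (t + s - l.length)).sum := by
  have hsplit := List.sum_take_add_sum_drop l t
  rw [List.rotate_eq_drop_append_take ht, List.take_append,
    List.take_of_length_le (by simp; omega), List.take_take, List.length_drop,
    min_eq_left (by omega), show s - (l.length - t) = t + s - l.length by omega, List.sum_append]
  omega

theorem eq_zero_of_rotate_mem_firstPassageLists {n d : ℕ} {l : List ℕ}
    (hl : l ∈ firstPassageLists 1 n) (hd : d < n) (hrot : l.rotate d ∈ firstPassageLists 1 n) :
    d = 0 := by
  obtain ⟨hlen, hsum, hpos⟩ := hl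
  by_contra hd0
  have hbefore := hpos d hd
  have hafter := hrot.2.2 (n - d) (by omega)
  have hsplit := sum_take_rotate_add_sum_take (l := l) (t := d) (s := n - d) (by omega)
  rw [show d + (n - d) = n by omega, List.take_of_length_le hlen.le] at hsplit
  omega

/-- The shift starting at the first minimum of the walk `t ↦ l[0] + ⋯ + l[t-1] - t` works. -/
theorem exists_rotate_mem_firstPassageLists {n : ℕ} {l : List ℕ} (hn : 0 < n)
    (hl : l ∈ listsWithSum n (n - 1)) : ∃ t < n, l.rotate t ∈ firstPassageLists 1 n := by
  obtain ⟨hlen, hsum⟩ := hl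
  let walk (t : ℕ) : ℤ := (l.take t).sum - t
  obtain ⟨t₁, ht₁, hmin₁⟩ := Finset.exists_min_image (Finset.range (n + 1)) walk ⟨0, by simp⟩
  have hex : ∃ t, walk t ≤ walk t₁ := ⟨t₁, le_rfl⟩
  set t₀ := Nat.find hex
  have hmin : ∀ s ≤ n, walk t₀ ≤ walk s := fun s hs =>
    (Nat.find_spec hex).trans (hmin₁ s (by simp; omega))
  have hfirst : ∀ v < t₀, walk t₀ < walk v := fun v hv =>
    (Nat.find_spec hex).trans_lt (not_le.mp (Nat.find_min hex hv))
  have ht₀n : t₀ ≤ n := (Nat.find_min' hex le_rfl).trans (by simp at ht₁; omega)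
  have hwalk_n : walk n = -1 := by
    simp only [walk, List.take_of_length_le hlen.le, hsum]
    omega
  have ht₀pos : 0 < t₀ := by
    by_contra h0
    have := hmin n le_rfl
    simp_all [walk]
  refine ⟨t₀ % n, Nat.mod_lt _ hn, ?_⟩
  rw [← hlen, List.rotate_mod]
  refine ⟨by simp [hlen], by rw [(l.rotate_perm t₀).sum_eq]; omega, fun s hs => ?_⟩
  rcases le_or_gt (t₀ + s) n with h | h
  · have := sum_take_rotate_add_sum_take (l := l) (t := t₀) (s := s) (by omega)
    have := hmin (t₀ + s) h
    simp only [walk] at *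
    omega
  · have := sum_take_rotate_add_sum_take_of_lt (l := l) (t := t₀) (s := s) (by omega)
      (by omega) (by omega)
    have := hfirst (t₀ + s - n) (by omega)
    simp only [walk] at *
    rw [hlen] at *
    omega

def rotateFirstPassage (n : ℕ) (p : Fin n × firstPassageLists 1 n) : listsWithSum n (n - 1) :=
  ⟨p.2.1.rotate p.1, by simp [p.2.2.1], by
    rw [(p.2.1.rotate_perm _).sum_eq]
    have := p.2.2.2.1
    omega⟩

theorem rotateFirstPassage_injective (n : ℕ) : Function.Injective (rotateFirstPassage n) := by
  rintro ⟨j, l, hl⟩ ⟨j', l', hl'⟩ h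
  wlog hjj : j ≤ j' generalizing j j' l l'
  · exact (this j' l' hl' j l hl h.symm (by omega)).symm
  have hrot : l = l'.rotate (j' - j) := by
    have h : l.rotate j = l'.rotate j' := congrArg Subtype.val h
    rwa [show (j' : ℕ) = j' - j + j by omega, ← List.rotate_rotate, List.rotate_eq_rotate] at h
  have hd := eq_zero_of_rotate_mem_firstPassageLists hl' (by omega) (hrot ▸ hl)
  obtain rfl : j = j' := Fin.ext (by omega)
  simp_all

theorem rotateFirstPassage_bijective {n : ℕ} (hn : 0 < n) :
    Function.Bijective (rotateFirstPassage n) := by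
  refine ⟨rotateFirstPassage_injective n, ?_⟩
  rintro ⟨l, hl⟩
  obtain ⟨t, ht, hrot⟩ := exists_rotate_mem_firstPassageLists hn hl
  have hlen := hl.1
  refine ⟨(⟨(n - t) % n, Nat.mod_lt _ hn⟩, ⟨l.rotate t, hrot⟩), Subtype.ext ?_⟩
  change (l.rotate t).rotate ((n - t) % n) = l
  rw [← hrot.1, List.rotate_mod, List.rotate_rotate, hrot.1, ← hl.1,
    show t + (l.length - t) = l.length by omega, List.rotate_length]

theorem tsum_listsWithSum_eq_mul (w : ℕ → ℝ≥0∞) {n : ℕ} (hn : 0 < n) :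
    ∑' l : listsWithSum n (n - 1), (l.1.map w).prod =
      n * ∑' l : firstPassageLists 1 n, (l.1.map w).prod := by
  have hrot (l : List ℕ) (j : ℕ) : ((l.rotate j).map w).prod = (l.map w).prod :=
    ((l.rotate_perm j).map w).prod_eq
  rw [← (Equiv.ofBijective _ (rotateFirstPassage_bijective hn)).tsum_eq]
  simp only [Equiv.ofBijective_apply, rotateFirstPassage, hrot]
  rw [ENNReal.tsum_prod', tsum_fintype]
  simp

@[to_additive]
theorem prod_range_getD {α M : Type*} [CommMonoid M] (l : List α) (f : α → M) (d : α) :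
    ∏ i ∈ Finset.range l.length, f (l.getD i d) = (l.map f).prod := by
  rw [Finset.prod_range, ← List.ofFn_getElem_eq_map, List.prod_ofFn]
  simp

def tableIndices (ll : List (List ℕ)) : Finset (ℕ × ℕ) :=
  (Finset.range ll.length).biUnion fun k => (Finset.range (ll.getD k []).length).image (k, ·)

def tableEntry (ll : List (List ℕ)) (p : ℕ × ℕ) : ℕ :=
  (ll.getD p.1 []).getD p.2 0

/-- `x k i` is the number of children of the `i`-th individual of generation `k`. -/
def MatchesTable (x : ℕ → ℕ → ℕ) (ll : List (List ℕ)) : Prop :=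
  ∀ p ∈ tableIndices ll, x p.1 p.2 = tableEntry ll p

theorem mem_tableIndices {ll : List (List ℕ)} {p : ℕ × ℕ} :
    p ∈ tableIndices ll ↔ p.2 < (ll.getD p.1 []).length := by
  obtain ⟨k, i⟩ := p
  simp only [tableIndices, Finset.mem_biUnion, Finset.mem_range, Finset.mem_image, Prod.mk.injEq]
  constructor
  · rintro ⟨k, -, i, hi, rfl, rfl⟩
    exact hi
  · intro hi
    refine ⟨k, ?_, i, hi, rfl, rfl⟩
    by_contra hk
    rw [List.getD_eq_default _ _ (not_lt.mp hk)] at hi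
    simp at hi

theorem matchesTable_iff {x : ℕ → ℕ → ℕ} {ll : List (List ℕ)} :
    MatchesTable x ll ↔ ∀ k, ∀ i < (ll.getD k []).length, x k i = (ll.getD k []).getD i 0 :=
  ⟨fun h k i hi => h (k, i) (mem_tableIndices.mpr hi),
    fun h p hp => h p.1 p.2 (mem_tableIndices.mp hp)⟩

theorem prod_tableIndices {M : Type*} [CommMonoid M] (f : ℕ → M) (ll : List (List ℕ)) :
    ∏ p ∈ tableIndices ll, f (tableEntry ll p) = (ll.flatten.map f).prod := by
  rw [tableIndices, Finset.prod_biUnion]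
  · simp_rw [Finset.prod_image fun _ _ _ _ h => (Prod.mk.inj h).2, tableEntry,
      prod_range_getD _ f 0, prod_range_getD ll (fun l => (l.map f).prod) []]
    rw [List.map_flatten, List.prod_flatten, List.map_map]
    rfl
  · intro k _ k' _ hk
    simp only [Function.onFun, Finset.disjoint_left, Finset.mem_image]
    rintro _ ⟨i, -, rfl⟩ ⟨i', -, h⟩
    exact hk (Prod.mk.inj h).1.symm

theorem eq_of_matchesTable {x : ℕ → ℕ → ℕ} {ll₁ ll₂ : List (List ℕ)}
    (h₁ : MatchesTable x ll₁) (h₂ : MatchesTable x ll₂) (hlen : ll₁.length = ll₂.length)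
    (hshape : ∀ k, (ll₁.getD k []).length = (ll₂.getD k []).length) : ll₁ = ll₂ := by
  refine List.ext_getElem hlen fun k hk₁ hk₂ => ?_
  have hk := hshape k
  rw [List.getD_eq_getElem _ _ hk₁, List.getD_eq_getElem _ _ hk₂] at hk
  refine List.ext_getElem hk fun i hi₁ hi₂ => ?_
  have e₁ := matchesTable_iff.mp h₁ k i (by rwa [List.getD_eq_getElem _ _ hk₁])
  have e₂ := matchesTable_iff.mp h₂ k i (by rwa [List.getD_eq_getElem _ _ hk₂])
  simp only [List.getD_eq_getElem _ _ hk₁, List.getD_eq_getElem _ _ hk₂,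
    List.getD_eq_getElem _ _ hi₁, List.getD_eq_getElem _ _ hi₂] at e₁ e₂
  rw [← e₁, ← e₂]

theorem IsGenerationTable.length_getD_pos {z : ℕ} {ll : List (List ℕ)}
    (ht : IsGenerationTable z ll) {k : ℕ} (hk : k < ll.length) : 0 < (ll.getD k []).length := by
  induction ll generalizing z k with
  | nil => simp at hk
  | cons l ls ih =>
    obtain ⟨hz, hl, hls⟩ := ht
    cases k with
    | zero => simpa [hl] using hz
    | succ k => simpa using ih hls (by simpa using hk)

theorem IsGenerationTable.length_le {z : ℕ} {ll₁ ll₂ : List (List ℕ)}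
    (ht : IsGenerationTable z ll₂) (h : ∀ k, (ll₁.getD k []).length = (ll₂.getD k []).length) :
    ll₂.length ≤ ll₁.length := by
  by_contra! hlt
  have := ht.length_getD_pos hlt
  rw [← h, List.getD_eq_default _ _ le_rfl] at this
  simp at this

section Population

variable {x : ℕ → ℕ → ℕ} {z : ℕ → ℕ}

def generation (x : ℕ → ℕ → ℕ) (z : ℕ → ℕ) (k : ℕ) : List ℕ :=
  (List.range (z k)).map (x k)

theorem eq_zero_of_le_of_eq_zero (hz : ∀ n, z (n + 1) = ∑ i ∈ Finset.range (z n), x n i)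
    {j k : ℕ} (hj : z j = 0) (hjk : j ≤ k) : z k = 0 := by
  induction k, hjk using Nat.le_induction with
  | base => exact hj
  | succ k _ ih => simp [hz, ih]

theorem isGenerationTable_generations (hz : ∀ n, z (n + 1) = ∑ i ∈ Finset.range (z n), x n i)
    {m : ℕ} (hm : z m = 0) (hpos : ∀ k < m, 0 < z k) :
    IsGenerationTable (z 0) ((List.range m).map (generation x z)) := by
  induction m generalizing x z with
  | zero => exact hm
  | succ m ih =>
    rw [List.range_succ_eq_map, List.map_cons, List.map_map]
    refine ⟨hpos 0 (by omega), by simp [generation], ?_⟩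
    rw [generation, ← List.sum_toFinset _ List.nodup_range, List.toFinset_range, ← hz]
    exact ih (x := fun k => x (k + 1)) (z := fun k => z (k + 1)) (fun n => hz (n + 1)) hm
      fun k hk => hpos (k + 1) (by omega)

theorem matchesTable_generations (m : ℕ) :
    MatchesTable x ((List.range m).map (generation x z)) := by
  rw [matchesTable_iff]
  intro k i hi
  rcases lt_or_ge k m with hk | hk
  · have hgen : ((List.range m).map (generation x z)).getD k [] = generation x z k := by
      simp [hk]
    rw [hgen] at hi ⊢
    simp_all [generation]
  · rw [List.getD_eq_default _ _ (by simpa using hk)] at hi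
    simp at hi

theorem IsGenerationTable.length_getD (hz : ∀ n, z (n + 1) = ∑ i ∈ Finset.range (z n), x n i)
    {ll : List (List ℕ)} (ht : IsGenerationTable (z 0) ll) (hx : MatchesTable x ll) (k : ℕ) :
    (ll.getD k []).length = z k := by
  induction ll generalizing x z k with
  | nil => exact (eq_zero_of_le_of_eq_zero hz ht k.zero_le).symm
  | cons l ls ih =>
    obtain ⟨-, hl, hls⟩ := ht
    have hx' := matchesTable_iff.mp hx
    cases k with
    | zero => simpa using hl
    | succ k =>
      have hz1 : z 1 = l.sum := by
        rw [hz, ← hl, ← List.map_id l, ← sum_range_getD l id 0, List.map_id]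
        exact Finset.sum_congr rfl fun i hi => hx' 0 i (by simpa using hi)
      exact ih (x := fun k => x (k + 1)) (z := fun k => z (k + 1)) (fun n => hz (n + 1))
        (hz1 ▸ hls) (matchesTable_iff.mpr fun k i hi => hx' (k + 1) i hi) k

theorem generationTable_unique (hz : ∀ n, z (n + 1) = ∑ i ∈ Finset.range (z n), x n i)
    {ll₁ ll₂ : List (List ℕ)} (h₁ : IsGenerationTable (z 0) ll₁) (h₂ : IsGenerationTable (z 0) ll₂)
    (hx₁ : MatchesTable x ll₁) (hx₂ : MatchesTable x ll₂) : ll₁ = ll₂ := by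
  have hshape (k : ℕ) : (ll₁.getD k []).length = (ll₂.getD k []).length := by
    rw [h₁.length_getD hz hx₁, h₂.length_getD hz hx₂]
  exact eq_of_matchesTable hx₁ hx₂
    (le_antisymm (h₁.length_le fun k => (hshape k).symm) (h₂.length_le hshape)) hshape

theorem tsum_length_getD {α : Type*} (ll : List (List α)) :
    ∑' k, ((ll.getD k []).length : ℕ∞) = ll.flatten.length := by
  rw [tsum_eq_sum (s := Finset.range ll.length) fun k hk => by
    rw [List.getD_eq_default _ _ (not_lt.mp (Finset.mem_range.not.mp hk))]
    rfl]
  norm_cast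
  rw [sum_range_getD ll List.length [], List.length_flatten]

theorem exists_eq_zero_of_tsum_eq {f : ℕ → ℕ} {n : ℕ} (h : ∑' k, (f k : ℕ∞) = n) :
    ∃ k, f k = 0 := by
  by_contra! hf
  have hsum : ((n + 1 : ℕ) : ℕ∞) ≤ ∑ k ∈ Finset.range (n + 1), (f k : ℕ∞) := by
    simpa using Finset.card_nsmul_le_sum (Finset.range (n + 1)) _ 1 fun k _ =>
      (by exact_mod_cast Nat.one_le_iff_ne_zero.mpr (hf k) : (1 : ℕ∞) ≤ f k)
  have := hsum.trans (h ▸ ((hasSum_of_isLUB _ isLUB_iSup).summable.sum_le_tsum _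
    fun _ _ => zero_le))
  norm_cast at this
  omega

theorem tsum_eq_iff_exists_generationTables
    (hz : ∀ n, z (n + 1) = ∑ i ∈ Finset.range (z n), x n i) (hz0 : z 0 = 1) (n : ℕ) :
    ∑' k, (z k : ℕ∞) = n ↔ ∃ ll ∈ generationTables 1 n, MatchesTable x ll := by
  have htsum {ll : List (List ℕ)} (ht : IsGenerationTable (z 0) ll) (hx : MatchesTable x ll) :
      ∑' k, (z k : ℕ∞) = ll.flatten.length := by
    simp_rw [← ht.length_getD hz hx]
    exact tsum_length_getD ll
  constructor
  · intro h
    have hex := exists_eq_zero_of_tsum_eq h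
    have ht := isGenerationTable_generations hz (Nat.find_spec hex)
      fun k hk => Nat.pos_of_ne_zero (Nat.find_min hex hk)
    have hx := matchesTable_generations (x := x) (z := z) (Nat.find hex)
    exact ⟨_, ⟨hz0 ▸ ht, by exact_mod_cast (htsum ht hx).symm.trans h⟩, hx⟩
  · rintro ⟨ll, ⟨ht, rfl⟩, hx⟩
    exact htsum (hz0 ▸ ht) hx

theorem sum_range_eq_iff_exists_listsWithSum (n s : ℕ) :
    ∑ i ∈ Finset.range n, x 0 i = s ↔ ∃ l ∈ listsWithSum n s, MatchesTable x [l] := by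
  constructor
  · rintro rfl
    refine ⟨(List.range n).map (x 0), ⟨by simp, ?_⟩, ?_⟩
    · rw [← List.sum_toFinset _ List.nodup_range, List.toFinset_range]
    · simpa [generation] using matchesTable_generations (x := x) (z := fun _ => n) 1
  · rintro ⟨l, ⟨rfl, rfl⟩, hx⟩
    rw [← List.map_id l, ← sum_range_getD l id 0, List.map_id]
    exact Finset.sum_congr rfl fun i hi =>
      matchesTable_iff.mp hx 0 i (by simpa using hi)

theorem listsWithSum_unique {n s : ℕ} {l₁ l₂ : List ℕ} (h₁ : l₁ ∈ listsWithSum n s)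
    (h₂ : l₂ ∈ listsWithSum n s) (hx₁ : MatchesTable x [l₁]) (hx₂ : MatchesTable x [l₂]) :
    l₁ = l₂ := by
  refine List.singleton_inj.mp (eq_of_matchesTable hx₁ hx₂ rfl fun k => ?_)
  cases k <;> simp [h₁.1, h₂.1]

end Population

section Probability

variable {Ω : Type*} [MeasurableSpace Ω] {P : Measure Ω}

theorem measure_forall_mem_eq_prod {ι α : Type*} [MeasurableSpace α] [MeasurableSingletonClass α]
    {μ : Measure α} {X : ι → Ω → α} (hX : ∀ i, Measurable (X i)) (hindep : iIndepFun X P)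
    (hdist : ∀ i, P.map (X i) = μ) (s : Finset ι) (a : ι → α) :
    P {ω | ∀ i ∈ s, X i ω = a i} = ∏ i ∈ s, μ {a i} := by
  have hset : {ω | ∀ i ∈ s, X i ω = a i} = ⋂ i ∈ s, X i ⁻¹' {a i} := by
    ext
    simp
  rw [hset, hindep.measure_inter_preimage_eq_mul s fun i _ => measurableSet_singleton (a i)]
  exact Finset.prod_congr rfl fun i _ => by
    rw [← hdist i, Measure.map_apply (hX i) (measurableSet_singleton _)]

variable {ξ : ℕ → ℕ → Ω → ℕ} {μ : Measure ℕ}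

theorem measure_exists_matchesTable (hξ : ∀ k i, Measurable (ξ k i))
    (hindep : iIndepFun (fun p : ℕ × ℕ => ξ p.1 p.2) P) (hdist : ∀ k i, P.map (ξ k i) = μ)
    (S : Set (List (List ℕ)))
    (huniq : ∀ ω, ∀ ll₁ ∈ S, ∀ ll₂ ∈ S,
      MatchesTable (ξ · · ω) ll₁ → MatchesTable (ξ · · ω) ll₂ → ll₁ = ll₂) :
    P {ω | ∃ ll ∈ S, MatchesTable (ξ · · ω) ll} =
      ∑' ll : S, (ll.1.flatten.map fun k => μ {k}).prod := by
  have hmeas (ll : List (List ℕ)) : MeasurableSet {ω | MatchesTable (ξ · · ω) ll} := by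
    simp only [MatchesTable, Set.ofPred_forall]
    exact .iInter fun p => .iInter fun _ => hξ p.1 p.2 (measurableSet_singleton _)
  have hevent : {ω | ∃ ll ∈ S, MatchesTable (ξ · · ω) ll} =
      ⋃ ll : S, {ω | MatchesTable (ξ · · ω) ll} := by
    ext
    simp
  have hdisj :
      Pairwise (Function.onFun Disjoint fun ll : S => {ω | MatchesTable (ξ · · ω) ll}) :=
    fun ll₁ ll₂ hne => Set.disjoint_left.mpr fun ω h₁ h₂ =>
      hne (Subtype.ext (huniq ω _ ll₁.2 _ ll₂.2 h₁ h₂))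
  rw [hevent, measure_iUnion hdisj fun ll => hmeas ll]
  refine tsum_congr fun ll => ?_
  rw [← prod_tableIndices]
  exact measure_forall_mem_eq_prod (fun p : ℕ × ℕ => hξ p.1 p.2) hindep
    (fun p => hdist p.1 p.2) _ _

theorem measure_sum_range_eq_tsum_listsWithSum (hξ : ∀ k i, Measurable (ξ k i))
    (hindep : iIndepFun (fun p : ℕ × ℕ => ξ p.1 p.2) P) (hdist : ∀ k i, P.map (ξ k i) = μ)
    (n s : ℕ) :
    P {ω | ∑ i ∈ Finset.range n, ξ 0 i ω = s} =
      ∑' l : listsWithSum n s, (l.1.map fun k => μ {k}).prod := by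
  have hevent : {ω | ∑ i ∈ Finset.range n, ξ 0 i ω = s} =
      {ω | ∃ ll ∈ (fun l => [l]) '' listsWithSum n s, MatchesTable (ξ · · ω) ll} := by
    ext ω
    rw [Set.mem_ofPred_eq, Set.mem_ofPred_eq, Set.exists_mem_image]
    exact sum_range_eq_iff_exists_listsWithSum (x := (ξ · · ω)) n s
  rw [hevent, measure_exists_matchesTable hξ hindep hdist,
    tsum_image (fun ll => (ll.flatten.map fun k => μ {k}).prod) List.singleton_injective.injOn]
  · simp
  · rintro ω _ ⟨l₁, h₁, rfl⟩ _ ⟨l₂, h₂, rfl⟩ hx₁ hx₂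
    rw [listsWithSum_unique h₁ h₂ hx₁ hx₂]

theorem measure_tsum_eq_tsum_generationTables {Z : ℕ → Ω → ℕ} (hξ : ∀ k i, Measurable (ξ k i))
    (hindep : iIndepFun (fun p : ℕ × ℕ => ξ p.1 p.2) P) (hdist : ∀ k i, P.map (ξ k i) = μ)
    (hZ0 : ∀ ω, Z 0 ω = 1) (hZ : ∀ n ω, Z (n + 1) ω = ∑ i ∈ Finset.range (Z n ω), ξ n i ω)
    (n : ℕ) :
    P {ω | ∑' k, (Z k ω : ℕ∞) = n} =
      ∑' ll : generationTables 1 n, (ll.1.flatten.map fun k => μ {k}).prod := by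
  have hevent : {ω | ∑' k, (Z k ω : ℕ∞) = n} =
      {ω | ∃ ll ∈ generationTables 1 n, MatchesTable (ξ · · ω) ll} := by
    ext ω
    exact tsum_eq_iff_exists_generationTables (hZ · ω) (hZ0 ω) n
  rw [hevent, measure_exists_matchesTable hξ hindep hdist]
  rintro ω ll₁ ⟨h₁, -⟩ ll₂ ⟨h₂, -⟩ hx₁ hx₂
  exact generationTable_unique (x := (ξ · · ω)) (z := (Z · ω)) (hZ · ω) ((hZ0 ω).symm ▸ h₁)
    ((hZ0 ω).symm ▸ h₂) hx₁ hx₂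

end Probability

end GaltonWatson

open GaltonWatson

theorem galtonWatson_size_eq_cycle_lemma_general
    {Ω : Type*} [MeasureSpace Ω]
    (μ : Measure ℕ)
    (ξ : ℕ → ℕ → Ω → ℕ)
    (hmeas : ∀ n i, Measurable (ξ n i))
    (hindep : iIndepFun
      (fun p : ℕ × ℕ => ξ p.1 p.2) ℙ)
    (hdist : ∀ n i, Measure.map (ξ n i) ℙ = μ)
    (Z : ℕ → Ω → ℕ)
    (hZ0 : ∀ ω, Z 0 ω = 1)
    (hZ : ∀ n ω, Z (n + 1) ω = ∑ i ∈ Finset.range (Z n ω), ξ n i ω)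
    (n : ℕ) (hn : 1 ≤ n) :
    ℙ {ω | (∑' k, (Z k ω : ℕ∞)) = (n : ℕ∞)} =
      (n : ℝ≥0∞)⁻¹ * ℙ {ω | (∑ i ∈ Finset.range n, ξ 0 i ω) = n - 1} := by
  rw [measure_tsum_eq_tsum_generationTables hmeas hindep hdist hZ0 hZ,
    measure_sum_range_eq_tsum_listsWithSum hmeas hindep hdist, tsum_listsWithSum_eq_mul _ hn,
    tsum_generationTables_eq_tsum_firstPassageLists, ← mul_assoc,
    ENNReal.inv_mul_cancel (by exact_mod_cast (by omega : n ≠ 0)) (ENNReal.natCast_ne_top n),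
    one_mul]

/-- Otter–Dwass / cycle lemma: for a critical offspring distribution `μ` (mean `1`,
finite nonzero variance), the probability that the total progeny of the Galton–Watson
branching process equals `n` is `n⁻¹` times the probability that the sum of `n` i.i.d.
offspring variables equals `n - 1`. -/
theorem galtonWatson_size_eq_cycle_lemma
    {Ω : Type*} [MeasureSpace Ω] [IsProbabilityMeasure (ℙ : Measure Ω)]
    (μ : Measure ℕ) [IsProbabilityMeasure μ]
    (ξ : ℕ → ℕ → Ω → ℕ)
    (hmeas : ∀ n i, Measurable (ξ n i))
    (hindep : iIndepFun
      (fun p : ℕ × ℕ => ξ p.1 p.2) ℙ)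
    (hdist : ∀ n i, Measure.map (ξ n i) ℙ = μ)
    (hmean : ∫⁻ k, (k : ℝ≥0∞) ∂μ = 1)
    (hvarfin : ∫⁻ k, ((k : ℝ≥0∞)) ^ 2 ∂μ < ∞)
    (hvarpos : μ {1} < 1)
    (Z : ℕ → Ω → ℕ)
    (hZ0 : ∀ ω, Z 0 ω = 1)
    (hZ : ∀ n ω, Z (n + 1) ω = ∑ i ∈ Finset.range (Z n ω), ξ n i ω)
    (n : ℕ) (hn : 1 ≤ n) :
    ℙ {ω | (∑' k, (Z k ω : ℕ∞)) = (n : ℕ∞)} =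
      (n : ℝ≥0∞)⁻¹ * ℙ {ω | (∑ i ∈ Finset.range n, ξ 0 i ω) = n - 1} :=
  galtonWatson_size_eq_cycle_lemma_general μ ξ hmeas hindep hdist Z hZ0 hZ n hn
end

section
/- Let ξ be an ℕ-valued random variable with ℙ(ξ=1)<1, not almost surely positive (i.e., ℙ(ξ=0)>0), with span d = gcd{k − ℓ : ℙ(ξ=k)>0, ℙ(ξ=ℓ)>0}. Then for all sufficiently large n with n ≡ 1 (mod d), the probability that a ξ-Galton–Watson tree has exactly n vertices is positive. -/
/-!
Let `S` be the set of positive points of the support of `μ`; its gcd is the span `d` because `0`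
is in the support. By Schur's theorem (`Nat.exists_mem_closure_of_ge`) every large multiple of `d`
is a sum `c₀ + ⋯ + c_{T-1}` of elements of `S`. The "caterpillar" tree in which generation `t`
consists of one individual with `c_t` children and otherwise childless individuals has
`1 + ∑ cₜ` vertices, and it is fixed by finitely many offspring values, each of positive
probability, so by independence it has positive probability.
-/

open MeasureTheory ProbabilityTheory

namespace Nat

lemma setGcd_diff_zero (s : Set ℕ) : setGcd (s \ {0}) = setGcd s :=
  Nat.dvd_antisymm
    (dvd_setGcd_iff.mpr fun m hm => by
      rcases eq_or_ne m 0 with rfl | hm0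
      · exact dvd_zero _
      · exact setGcd_dvd_of_mem ⟨hm, hm0⟩)
    (setGcd_mono Set.sdiff_subset)

lemma dvd_setGcd_iff_forall_dvd_sub {s : Set ℕ} (hs : 0 ∈ s) {e : ℕ} :
    e ∣ setGcd s ↔ ∀ k l : ℕ, k ∈ s → l ∈ s → (e : ℤ) ∣ (k : ℤ) - (l : ℤ) := by
  rw [dvd_setGcd_iff]
  refine ⟨fun h k l hk hl => Int.dvd_sub (Int.natCast_dvd_natCast.mpr (h k hk))
    (Int.natCast_dvd_natCast.mpr (h l hl)), fun h m hm => ?_⟩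
  exact_mod_cast (by simpa using h m 0 hm hs : (e : ℤ) ∣ m)

lemma eq_of_isGreatest_setOf_dvd {d g : ℕ} (h : IsGreatest {e | e ∣ g} d) : d = g := by
  rcases eq_or_ne g 0 with rfl | hg
  · exact absurd (h.2 (dvd_zero (d + 1))) (by omega)
  · exact le_antisymm (Nat.le_of_dvd (pos_of_ne_zero hg) h.1) (h.2 dvd_rfl)

end Nat

lemma List.tsum_getD_zero (l : List ℕ) : ∑' t, (l.getD t 0 : ℕ∞) = l.sum := by
  rw [tsum_eq_sum (s := Finset.range l.length) fun t ht => by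
    rw [List.getD_eq_default _ _ (by simpa using ht), Nat.cast_zero]]
  rw [← Nat.cast_sum, Finset.sum_range, ← Fin.sum_univ_getElem]
  simp

lemma List.getD_zero_mem_or_eq_zero (l : List ℕ) (t : ℕ) : l.getD t 0 ∈ l ∨ l.getD t 0 = 0 := by
  rcases lt_or_ge t l.length with ht | ht
  · exact .inl (List.getD_eq_getElem l 0 ht ▸ List.getElem_mem ht)
  · exact .inr (List.getD_eq_default l 0 ht)

lemma measure_biInter_preimage_singleton_pos {Ω ι α : Type*} [MeasurableSpace Ω]
    [MeasurableSpace α] [MeasurableSingletonClass α] {P : Measure Ω} {μ : Measure α}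
    {X : ι → Ω → α} (hX : ∀ i, Measurable (X i)) (hindep : iIndepFun X P)
    (hdist : ∀ i, P.map (X i) = μ) (F : Finset ι) (v : ι → α) (hv : ∀ i ∈ F, μ {v i} ≠ 0) :
    0 < P (⋂ i ∈ F, X i ⁻¹' {v i}) := by
  rw [hindep.meas_biInter fun i _ => ⟨{v i}, measurableSet_singleton _, rfl⟩, pos_iff_ne_zero,
    Finset.prod_ne_zero_iff]
  intro i hi
  rw [← Measure.map_apply (hX i) (measurableSet_singleton _), hdist]
  exact hv i hi

lemma caterpillar_generations {l : List ℕ} (hl : 0 ∉ l) {x : ℕ → ℕ → ℕ} {z : ℕ → ℕ}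
    (hz0 : z 0 = 1) (hz : ∀ t, z (t + 1) = ∑ i ∈ Finset.range (z t), x t i)
    (hx : ∀ t ≤ l.length, ∀ i ≤ l.sum, x t i = if i = 0 then l.getD t 0 else 0) (t : ℕ) :
    z t = (1 :: l).getD t 0 := by
  induction t with
  | zero => simpa using hz0
  | succ t ih =>
    rw [hz, ih, List.getD_cons_succ]
    rcases le_or_gt t l.length with ht | ht
    · have hlt : t < (1 :: l).length := Nat.lt_succ_of_le ht
      have hmem : (1 :: l).getD t 0 ∈ 1 :: l :=
        List.getD_eq_getElem _ 0 hlt ▸ List.getElem_mem hlt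
      have hpos : 0 < (1 :: l).getD t 0 :=
        pos_of_ne_zero fun h => by rw [h] at hmem; simp_all
      have hle : (1 :: l).getD t 0 ≤ 1 + l.sum := by
        simpa using List.le_sum_of_mem hmem
      rw [Finset.sum_congr rfl fun i hi => hx t ht i (by have := Finset.mem_range.1 hi; omega),
        Finset.sum_ite_eq', if_pos (Finset.mem_range.2 hpos)]
    · rw [List.getD_eq_default _ _ (by simpa using ht), List.getD_eq_default _ _ ht.le]
      simp

section GaltonWatson

variable {Ω : Type*} [MeasureSpace Ω] {μ : Measure ℕ} {ξ : ℕ → ℕ → Ω → ℕ} {Z : ℕ → Ω → ℕ}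

lemma measure_totalProgeny_eq_one_add_sum_pos (hmeas : ∀ n i, Measurable (ξ n i))
    (hindep : iIndepFun (fun p : ℕ × ℕ => ξ p.1 p.2) ℙ)
    (hdist : ∀ n i, Measure.map (ξ n i) ℙ = μ) (h0 : μ {0} ≠ 0)
    (hZ0 : ∀ ω, Z 0 ω = 1) (hZ : ∀ n ω, Z (n + 1) ω = ∑ i ∈ Finset.range (Z n ω), ξ n i ω)
    {l : List ℕ} (hl : ∀ c ∈ l, μ {c} ≠ 0) (hl0 : 0 ∉ l) :
    0 < ℙ {ω | ∑' k, (Z k ω : ℕ∞) = ((1 + l.sum : ℕ) : ℕ∞)} := by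
  set v : ℕ × ℕ → ℕ := fun p => if p.2 = 0 then l.getD p.1 0 else 0
  have hv : ∀ p, μ {v p} ≠ 0 := fun p => by
    rcases l.getD_zero_mem_or_eq_zero p.1 with h | h <;> grind
  refine (measure_biInter_preimage_singleton_pos (fun p => hmeas p.1 p.2) hindep
    (fun p => hdist p.1 p.2) (Finset.range (l.length + 1) ×ˢ Finset.range (l.sum + 1)) v
    fun p _ => hv p).trans_le (measure_mono fun ω hω => ?_)
  have hgen := caterpillar_generations hl0 (x := fun t i => ξ t i ω) (z := (Z · ω)) (hZ0 ω)
    (hZ · ω) fun t ht i hi =>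
      Set.mem_iInter₂.1 hω (t, i) (by simp only [Finset.mem_product, Finset.mem_range]; omega)
  simp only [Set.mem_ofPred_eq, hgen, List.tsum_getD_zero, List.sum_cons]

end GaltonWatson

theorem galtonWatson_size_positive_probability_general
    {Ω : Type*} [MeasureSpace Ω]
    (μ : Measure ℕ)
    (ξ : ℕ → ℕ → Ω → ℕ)
    (hmeas : ∀ n i, Measurable (ξ n i))
    (hindep : iIndepFun
      (fun p : ℕ × ℕ => ξ p.1 p.2) ℙ)
    (hdist : ∀ n i, Measure.map (ξ n i) ℙ = μ)
    (h0 : 0 < μ {0})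
    (d : ℕ)
    (hd : IsGreatest {e : ℕ | ∀ k l : ℕ, μ {k} ≠ 0 → μ {l} ≠ 0 →
      (e : ℤ) ∣ (k : ℤ) - (l : ℤ)} d)
    (Z : ℕ → Ω → ℕ)
    (hZ0 : ∀ ω, Z 0 ω = 1)
    (hZ : ∀ n ω, Z (n + 1) ω = ∑ i ∈ Finset.range (Z n ω), ξ n i ω) :
    ∃ N : ℕ, ∀ n ≥ N, n % d = 1 % d →
      0 < ℙ {ω | (∑' k, (Z k ω : ℕ∞)) = (n : ℕ∞)} := by
  set S := {k : ℕ | μ {k} ≠ 0}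
  have hdS : d = Nat.setGcd S := Nat.eq_of_isGreatest_setOf_dvd <| by
    convert hd using 1
    exact Set.ext fun e => Nat.dvd_setGcd_iff_forall_dvd_sub (s := S) h0.ne'
  obtain ⟨N, hN⟩ := Nat.exists_mem_closure_of_ge (S \ {0})
  refine ⟨N + 1, fun n hn hmod => ?_⟩
  have hmem : n - 1 ∈ AddSubmonoid.closure (S \ {0}) := by
    refine hN _ (by omega) ?_
    rw [Nat.setGcd_diff_zero, ← hdS]
    exact Nat.dvd_of_mod_eq_zero (Nat.sub_mod_eq_zero_of_mod_eq hmod)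
  obtain ⟨l, hlS, hsum⟩ := AddSubmonoid.exists_list_of_mem_closure hmem
  have hpos := measure_totalProgeny_eq_one_add_sum_pos hmeas hindep hdist h0.ne' hZ0 hZ
    (fun c hc => (hlS c hc).1) (fun h => (hlS 0 h).2 rfl)
  rwa [hsum, Nat.add_sub_cancel' (by omega)] at hpos

/-- Let `ξ` have offspring distribution `μ` with `μ {1} < 1`, `μ {0} > 0`, and span `d`
(the greatest common divisor of all differences of points of the support of `μ`). Then for
all sufficiently large `n` with `n ≡ 1 (mod d)`, the probability that the total progeny of
the Galton–Watson process equals `n` is positive. -/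
theorem galtonWatson_size_positive_probability
    {Ω : Type*} [MeasureSpace Ω] [IsProbabilityMeasure (ℙ : Measure Ω)]
    (μ : Measure ℕ) [IsProbabilityMeasure μ]
    (ξ : ℕ → ℕ → Ω → ℕ)
    (hmeas : ∀ n i, Measurable (ξ n i))
    (hindep : iIndepFun
      (fun p : ℕ × ℕ => ξ p.1 p.2) ℙ)
    (hdist : ∀ n i, Measure.map (ξ n i) ℙ = μ)
    (h1 : μ {1} < 1)
    (h0 : 0 < μ {0})
    (d : ℕ)
    (hd : IsGreatest {e : ℕ | ∀ k l : ℕ, μ {k} ≠ 0 → μ {l} ≠ 0 →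
      (e : ℤ) ∣ (k : ℤ) - (l : ℤ)} d)
    (Z : ℕ → Ω → ℕ)
    (hZ0 : ∀ ω, Z 0 ω = 1)
    (hZ : ∀ n ω, Z (n + 1) ω = ∑ i ∈ Finset.range (Z n ω), ξ n i ω) :
    ∃ N : ℕ, ∀ n ≥ N, n % d = 1 % d →
      0 < ℙ {ω | (∑' k, (Z k ω : ℕ∞)) = (n : ℕ∞)} :=
  galtonWatson_size_positive_probability_general μ ξ hmeas hindep hdist h0 d hd Z hZ0 hZ
end

section
/- Let C be a connected graph, let x be a vertex, and define d̄_C(x,y) as the distance from x to y in the block tree structure rooted at x (equivalently, the minimum number of blocks needed to cover the edges of a shortest path from x to y). Then d̄_C is a metric on the vertex set of C. -/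
/-!
Every edge lies in exactly one block: blocks are the maximal biconnected subgraphs, and two
blocks sharing an edge have a biconnected union, so they coincide. If `p` is a path and `q` a
walk with the same ends, the first edge `xa` of `p` is either on `q` or on the cycle that
returns from `a` to `x` along the rest of `p` and then backwards along `q`; that cycle meets `q`
in an edge at `x`, so `xa` shares its block with an edge of `q`. Induction along `p` extends this
to all of `p`. Hence the blocks of two optimal paths `x ⇝ y` and `y ⇝ z` cover a shortest path
`x ⇝ z`, which is the triangle inequality; symmetry comes from reversing paths.
-/

open SimpleGraph

/-- A block of a graph `G`: a maximal connected subgraph without a cutvertex. -/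
def IsBlock {V : Type*} (G : SimpleGraph V) (H : G.Subgraph) : Prop :=
  H.Connected ∧
  (∀ v ∈ H.verts, (H.deleteVerts {v}).verts.Nonempty → (H.deleteVerts {v}).Connected) ∧
  (∀ H' : G.Subgraph, H ≤ H' → H'.Connected →
    (∀ v ∈ H'.verts, (H'.deleteVerts {v}).verts.Nonempty → (H'.deleteVerts {v}).Connected) →
    H' = H)

/-- The block distance `d̄_C(x,y)`: the minimal number of blocks needed to cover the edges
of a shortest path from `x` to `y`. -/
noncomputable def blockDist {V : Type*} (G : SimpleGraph V) (x y : V) : ℕ :=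
  sInf {n : ℕ | ∃ p : G.Walk x y, p.IsPath ∧ p.length = G.dist x y ∧
    ∃ S : Finset G.Subgraph, S.card = n ∧ (∀ H ∈ S, IsBlock G H) ∧
      ∀ e ∈ p.edges, ∃ H ∈ S, e ∈ H.edgeSet}

namespace SimpleGraph

variable {V : Type*} {G : SimpleGraph V}

namespace Subgraph

lemma deleteVerts_singleton_of_notMem {H : G.Subgraph} {v : V} (hv : v ∉ H.verts) :
    H.deleteVerts {v} = H := by
  rw [← deleteVerts_inter_verts_left_eq, Set.inter_singleton_eq_empty.2 hv, deleteVerts_empty]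

lemma deleteVerts_sup (H K : G.Subgraph) (s : Set V) :
    (H ⊔ K).deleteVerts s = H.deleteVerts s ⊔ K.deleteVerts s := by
  ext a b
  · simp only [deleteVerts_verts, verts_sup, Set.union_sdiff_distrib]
  · simp only [deleteVerts_adj, sup_adj, verts_sup, Set.mem_union]
    constructor
    · rintro ⟨-, ha, -, hb, h | h⟩
      exacts [Or.inl ⟨H.edge_vert h, ha, H.edge_vert h.symm, hb, h⟩,
        Or.inr ⟨K.edge_vert h, ha, K.edge_vert h.symm, hb, h⟩]
    · rintro (⟨h₁, h₂, h₃, h₄, h⟩ | ⟨h₁, h₂, h₃, h₄, h⟩)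
      exacts [⟨.inl h₁, h₂, .inl h₃, h₄, .inl h⟩, ⟨.inr h₁, h₂, .inr h₃, h₄, .inr h⟩]

lemma le_deleteVerts {H K : G.Subgraph} {s : Set V} (hle : H ≤ K) (hs : Disjoint H.verts s) :
    H ≤ K.deleteVerts s :=
  ⟨fun _ hz => ⟨hle.1 hz, hs.notMem_of_mem_left hz⟩, fun _ _ hab =>
    ⟨⟨hle.1 (H.edge_vert hab), hs.notMem_of_mem_left (H.edge_vert hab)⟩,
      ⟨hle.1 (H.edge_vert hab.symm), hs.notMem_of_mem_left (H.edge_vert hab.symm)⟩, hle.2 hab⟩⟩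

lemma preconnected_of_subsingleton {H : G.Subgraph} (h : H.verts.Subsingleton) :
    H.Preconnected :=
  have := h.coe_sort
  ⟨.of_subsingleton⟩

lemma preconnected_of_forall_exists_le {H : G.Subgraph}
    (h : ∀ u ∈ H.verts, ∀ w ∈ H.verts, ∃ K ≤ H, K.Preconnected ∧ u ∈ K.verts ∧ w ∈ K.verts) :
    H.Preconnected := by
  rw [preconnected_iff_forall_exists_walk_subgraph]
  intro u w hu hw
  obtain ⟨K, hKH, hK, huK, hwK⟩ := h u hu w hw
  obtain ⟨p, hp⟩ := (preconnected_iff_forall_exists_walk_subgraph K).1 hK huK hwK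
  exact ⟨p, hp.trans hKH⟩

lemma exists_mem_verts_of_isChain {c : Set G.Subgraph} (hc : IsChain (· ≤ ·) c) {u w : V}
    (hu : u ∈ (sSup c).verts) (hw : w ∈ (sSup c).verts) :
    ∃ H ∈ c, u ∈ H.verts ∧ w ∈ H.verts := by
  simp only [verts_sSup, Set.mem_iUnion₂] at hu hw
  obtain ⟨A, hA, huA⟩ := hu
  obtain ⟨B, hB, hwB⟩ := hw
  rcases hc.total hA hB with hAB | hBA
  exacts [⟨B, hB, hAB.1 huA, hwB⟩, ⟨A, hA, huA, hBA.1 hwB⟩]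

/-- Connected with no cutvertex; a single vertex or a single edge counts as biconnected. -/
def IsBiconnected (H : G.Subgraph) : Prop :=
  H.Connected ∧ ∀ v ∈ H.verts, (H.deleteVerts {v}).Preconnected

lemma isBiconnected_iff {H : G.Subgraph} :
    H.IsBiconnected ↔ H.Connected ∧ ∀ v ∈ H.verts,
      (H.deleteVerts {v}).verts.Nonempty → (H.deleteVerts {v}).Connected := by
  refine and_congr_right fun _ => forall₂_congr fun v _ => ?_
  simp only [Subgraph.connected_iff]
  refine ⟨fun h hne => ⟨h, hne⟩, fun h => ?_⟩
  rcases (H.deleteVerts {v}).verts.eq_empty_or_nonempty with he | hne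
  · exact preconnected_of_subsingleton (he ▸ Set.subsingleton_empty)
  · exact (h hne).1

lemma IsBiconnected.preconnected_deleteVerts {H : G.Subgraph} (h : H.IsBiconnected) (v : V) :
    (H.deleteVerts {v}).Preconnected := by
  by_cases hv : v ∈ H.verts
  · exact h.2 v hv
  · rw [deleteVerts_singleton_of_notMem hv]
    exact h.1.preconnected

lemma IsBiconnected.sup {H K : G.Subgraph} (hH : H.IsBiconnected) (hK : K.IsBiconnected)
    {a b : V} (hab : a ≠ b) (ha : a ∈ (H ⊓ K).verts) (hb : b ∈ (H ⊓ K).verts) :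
    (H ⊔ K).IsBiconnected := by
  refine ⟨connected_sup hH.1.preconnected hK.1.preconnected ⟨a, ha⟩, fun v _ => ?_⟩
  obtain ⟨w, hw, hwv⟩ : ∃ w ∈ (H ⊓ K).verts, w ≠ v := by
    rcases eq_or_ne a v with rfl | hav
    exacts [⟨b, hb, hab.symm⟩, ⟨a, ha, hav⟩]
  rw [deleteVerts_sup]
  exact (connected_sup (hH.preconnected_deleteVerts v) (hK.preconnected_deleteVerts v)
    ⟨w, ⟨hw.1, hwv⟩, hw.2, hwv⟩).preconnected

lemma isBiconnected_sSup_of_isChain {c : Set G.Subgraph} (hc : IsChain (· ≤ ·) c)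
    (hne : c.Nonempty) (h : ∀ H ∈ c, H.IsBiconnected) : (sSup c).IsBiconnected := by
  refine ⟨Subgraph.connected_iff.2 ⟨?_, ?_⟩, fun v _ => ?_⟩
  · refine preconnected_of_forall_exists_le fun u hu w hw => ?_
    obtain ⟨B, hB, huB, hwB⟩ := exists_mem_verts_of_isChain hc hu hw
    exact ⟨B, le_sSup hB, (h B hB).1.preconnected, huB, hwB⟩
  · obtain ⟨H, hH⟩ := hne
    exact (h H hH).1.nonempty.mono (le_sSup hH).1
  · refine preconnected_of_forall_exists_le fun u hu w hw => ?_
    obtain ⟨B, hB, huB, hwB⟩ := exists_mem_verts_of_isChain hc hu.1 hw.1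
    exact ⟨B.deleteVerts {v}, deleteVerts_mono (le_sSup hB),
      (h B hB).preconnected_deleteVerts v, ⟨huB, hu.2⟩, ⟨hwB, hw.2⟩⟩

lemma isBiconnected_subgraphOfAdj {a b : V} (h : G.Adj a b) :
    (G.subgraphOfAdj h).IsBiconnected := by
  refine ⟨subgraphOfAdj_connected h, fun v hv => preconnected_of_subsingleton ?_⟩
  rintro x ⟨hx, hxv⟩ y ⟨hy, hyv⟩
  simp only [subgraphOfAdj_verts, Set.mem_insert_iff, Set.mem_singleton_iff] at hv hx hy hxv hyv
  grind

end Subgraph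

namespace Walk

open Subgraph

lemma toSubgraph_dropLast_le {u v : V} {p : G.Walk u v} (hp : ¬p.Nil) :
    p.dropLast.toSubgraph ≤ p.toSubgraph := by
  conv_rhs => rw [← concat_dropLast (adj_penultimate hp), concat_eq_append, toSubgraph_append]
  exact le_sup_left

lemma IsCycle.preconnected_toSubgraph_deleteVerts_start {v : V} {c : G.Walk v v}
    (hc : c.IsCycle) : (c.toSubgraph.deleteVerts {v}).Preconnected := by
  cases c with
  | nil => exact absurd rfl hc.ne_nil
  | cons h t =>
    have ht : t.IsPath := ((cons_isCycle_iff t h).1 hc).1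
    have hnil : ¬t.Nil := not_nil_of_ne h.ne.symm
    have hsupp : t.support = t.dropLast.support ++ [v] := (support_dropLast_concat hnil).symm
    have hv : v ∉ t.dropLast.support := fun hv =>
      (List.nodup_append.1 (hsupp ▸ ht.support_nodup)).2.2 v hv v (List.mem_singleton_self v) rfl
    have hle : t.dropLast.toSubgraph ≤ (cons h t).toSubgraph.deleteVerts {v} :=
      le_deleteVerts ((toSubgraph_dropLast_le hnil).trans le_sup_right)
        (Set.disjoint_singleton_right.2 ((mem_verts_toSubgraph _).not.2 hv))
    refine (Subgraph.Connected.mono hle (le_antisymm hle.1 fun z ⟨hz, hzv⟩ => ?_)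
      t.dropLast.toSubgraph_connected).preconnected
    rw [mem_verts_toSubgraph, support_cons, hsupp] at hz
    simp only [List.mem_cons, List.mem_append] at hz
    have hzv : z ≠ v := hzv
    rw [mem_verts_toSubgraph]
    tauto

lemma IsCycle.isBiconnected_toSubgraph {u : V} {c : G.Walk u u} (hc : c.IsCycle) :
    c.toSubgraph.IsBiconnected := by
  classical
  refine ⟨c.toSubgraph_connected, fun v hv => ?_⟩
  rw [mem_verts_toSubgraph] at hv
  rw [← c.toSubgraph_rotate hv]
  exact (hc.rotate hv).preconnected_toSubgraph_deleteVerts_start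

end Walk

end SimpleGraph

section Blocks

variable {V : Type*} {G : SimpleGraph V}

open Subgraph Walk

lemma isBlock_iff_maximal {B : G.Subgraph} : IsBlock G B ↔ Maximal IsBiconnected B := by
  constructor
  · rintro ⟨hc, hn, hmax⟩
    refine ⟨isBiconnected_iff.2 ⟨hc, hn⟩, fun H hH hle => ?_⟩
    obtain ⟨hc', hn'⟩ := isBiconnected_iff.1 hH
    exact (hmax H hle hc' hn').le
  · rintro ⟨hB, hmax⟩
    obtain ⟨hc, hn⟩ := isBiconnected_iff.1 hB
    exact ⟨hc, hn, fun H hle hc' hn' => le_antisymm (hmax (isBiconnected_iff.2 ⟨hc', hn'⟩) hle) hle⟩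

lemma exists_isBlock_ge {H : G.Subgraph} (hH : H.IsBiconnected) : ∃ B, IsBlock G B ∧ H ≤ B := by
  obtain ⟨B, hHB, hB⟩ := zorn_le_nonempty₀ {H : G.Subgraph | H.IsBiconnected}
    (fun c hcs hc H hH => ⟨sSup c, isBiconnected_sSup_of_isChain hc ⟨H, hH⟩ hcs,
      fun _ => le_sSup⟩) H hH
  exact ⟨B, isBlock_iff_maximal.2 hB, hHB⟩

lemma IsBlock.eq_of_mem_edgeSet {B₁ B₂ : G.Subgraph} (h₁ : IsBlock G B₁) (h₂ : IsBlock G B₂)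
    {e : Sym2 V} (he₁ : e ∈ B₁.edgeSet) (he₂ : e ∈ B₂.edgeSet) : B₁ = B₂ := by
  induction e using Sym2.ind with | _ a b => ?_
  rw [isBlock_iff_maximal] at h₁ h₂
  have hsup : (B₁ ⊔ B₂).IsBiconnected := h₁.prop.sup h₂.prop (B₁.adj_sub he₁).ne
    ⟨B₁.edge_vert he₁, B₂.edge_vert he₂⟩ ⟨B₁.edge_vert he₁.symm, B₂.edge_vert he₂.symm⟩
  exact (h₁.eq_of_le hsup le_sup_left).trans (h₂.eq_of_le hsup le_sup_right).symm

lemma exists_isBlock_adj {a b : V} (h : G.Adj a b) : ∃ B, IsBlock G B ∧ B.Adj a b := by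
  obtain ⟨B, hB, hle⟩ := exists_isBlock_ge (isBiconnected_subgraphOfAdj h)
  exact ⟨B, hB, hle.2 (by simp)⟩

lemma exists_isBlock_of_cons_isPath {x a y : V} (h : G.Adj x a) (p : G.Walk a y)
    (hp : (cons h p).IsPath) (q : G.Walk x y) :
    ∃ B, IsBlock G B ∧ s(x, a) ∈ B.edgeSet ∧ ∃ f ∈ q.edges, f ∈ B.edgeSet := by
  classical
  by_cases hxa : s(x, a) ∈ q.edges
  · obtain ⟨B, hB, hxaB⟩ := exists_isBlock_adj h
    exact ⟨B, hB, hxaB, _, hxa, hxaB⟩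
  have hx : x ∉ p.support := ((cons_isPath_iff h p).1 hp).2
  set r := (p.append q.reverse).bypass
  have hr : ∀ f ∈ r.edges, f ∈ p.edges ∨ f ∈ q.edges := fun f hf => by
    simpa [edges_append] using (p.append q.reverse).edges_bypass_subset_edges hf
  have hcycle : (cons h r).IsCycle := (cons_isCycle_iff r h).2 ⟨bypass_isPath _,
    fun hxr => (hr _ hxr).elim (fun hxp => hx (p.fst_mem_support_of_mem_edges hxp)) hxa⟩
  obtain ⟨B, hB, hle⟩ := exists_isBlock_ge hcycle.isBiconnected_toSubgraph
  have hcB : ∀ f ∈ (cons h r).edges, f ∈ B.edgeSet := fun f hf =>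
    Subgraph.edgeSet_mono hle ((mem_edges_toSubgraph _).2 hf)
  -- `r` ends at `x`, and its edge at `x` cannot lie on `p`, which avoids `x`.
  obtain ⟨f, hf, hxf⟩ := (mem_support_iff_exists_mem_edges_of_not_nil
    (not_nil_of_ne h.ne.symm)).1 r.end_mem_support
  have hfq : f ∈ q.edges := (hr f hf).resolve_left fun hfp =>
    hx (mem_support_iff_exists_mem_edges.2 (.inr ⟨f, hfp, hxf⟩))
  exact ⟨B, hB, hcB _ List.mem_cons_self, f, hfq, hcB f (List.mem_cons_of_mem _ hf)⟩

lemma exists_isBlock_of_mem_edges {x y : V} {p : G.Walk x y} (hp : p.IsPath) (q : G.Walk x y)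
    {e : Sym2 V} (he : e ∈ p.edges) :
    ∃ B, IsBlock G B ∧ e ∈ B.edgeSet ∧ ∃ f ∈ q.edges, f ∈ B.edgeSet := by
  induction p with
  | nil => simp at he
  | cons h p ih =>
    obtain ⟨B, hB, hxaB, hfirst⟩ := exists_isBlock_of_cons_isPath h p hp q
    rw [edges_cons, List.mem_cons] at he
    rcases he with rfl | he
    · exact ⟨B, hB, hxaB, hfirst⟩
    obtain ⟨B', hB', heB', f, hf, hfB'⟩ := ih hp.of_cons (cons h.symm q) he
    rw [edges_cons, List.mem_cons] at hf
    rcases hf with rfl | hf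
    · obtain rfl := hB'.eq_of_mem_edgeSet hB hfB' (Sym2.eq_swap ▸ hxaB)
      exact ⟨B', hB', heB', hfirst⟩
    · exact ⟨B', hB', heB', f, hf, hfB'⟩

def IsBlockCover (S : Finset G.Subgraph) {x y : V} (p : G.Walk x y) : Prop :=
  (∀ H ∈ S, IsBlock G H) ∧ ∀ e ∈ p.edges, ∃ H ∈ S, e ∈ H.edgeSet

variable {S T : Finset G.Subgraph}

lemma IsBlockCover.reverse {x y : V} {p : G.Walk x y} (hS : IsBlockCover S p) :
    IsBlockCover S p.reverse :=
  ⟨hS.1, fun e he => hS.2 e (by simpa using he)⟩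

lemma IsBlockCover.append [DecidableEq G.Subgraph] {x y z : V} {p : G.Walk x y}
    {q : G.Walk y z} (hS : IsBlockCover S p) (hT : IsBlockCover T q) :
    IsBlockCover (S ∪ T) (p.append q) := by
  refine ⟨fun H hH => (Finset.mem_union.1 hH).elim (hS.1 H) (hT.1 H), fun e he => ?_⟩
  rcases List.mem_append.1 (edges_append p q ▸ he) with he | he
  · obtain ⟨H, hH, heH⟩ := hS.2 e he
    exact ⟨H, Finset.mem_union_left T hH, heH⟩
  · obtain ⟨H, hH, heH⟩ := hT.2 e he
    exact ⟨H, Finset.mem_union_right S hH, heH⟩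

lemma IsBlockCover.of_isPath {x y : V} {q : G.Walk x y} (hS : IsBlockCover S q)
    {p : G.Walk x y} (hp : p.IsPath) : IsBlockCover S p := by
  refine ⟨hS.1, fun e he => ?_⟩
  obtain ⟨B, hB, heB, f, hf, hfB⟩ := exists_isBlock_of_mem_edges hp q he
  obtain ⟨H, hH, hfH⟩ := hS.2 f hf
  exact ⟨H, hH, hB.eq_of_mem_edgeSet (hS.1 H hH) hfB hfH ▸ heB⟩

lemma exists_isBlockCover {x y : V} (p : G.Walk x y) : ∃ S, IsBlockCover S p := by
  classical
  induction p with
  | nil => exact ⟨∅, by simp, by simp⟩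
  | cons h p ih =>
    obtain ⟨S, hS⟩ := ih
    obtain ⟨B, hB, hab⟩ := exists_isBlock_adj h
    refine ⟨insert B S, Finset.forall_mem_insert _ _ _ |>.2 ⟨hB, hS.1⟩, fun e he => ?_⟩
    rw [edges_cons, List.mem_cons] at he
    rcases he with rfl | he
    · exact ⟨B, Finset.mem_insert_self B S, hab⟩
    · obtain ⟨H, hH, heH⟩ := hS.2 e he
      exact ⟨H, Finset.mem_insert_of_mem hH, heH⟩

lemma blockDist_le {x y : V} {p : G.Walk x y} (hp : p.IsPath) (hl : p.length = G.dist x y)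
    (hS : IsBlockCover S p) : blockDist G x y ≤ S.card :=
  Nat.sInf_le ⟨p, hp, hl, S, rfl, hS⟩

lemma SimpleGraph.Connected.exists_isBlockCover_card_eq_blockDist (hG : G.Connected)
    (x y : V) : ∃ p : G.Walk x y, p.IsPath ∧ p.length = G.dist x y ∧
      ∃ S : Finset G.Subgraph, IsBlockCover S p ∧ S.card = blockDist G x y := by
  obtain ⟨p, hp, hl⟩ := hG.exists_path_of_dist x y
  obtain ⟨S, hS⟩ := exists_isBlockCover p
  have hne : {n | ∃ p : G.Walk x y, p.IsPath ∧ p.length = G.dist x y ∧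
      ∃ S : Finset G.Subgraph, S.card = n ∧ IsBlockCover S p}.Nonempty :=
    ⟨S.card, p, hp, hl, S, rfl, hS⟩
  obtain ⟨q, hq, hql, T, hT, hTq⟩ := Nat.sInf_mem hne
  exact ⟨q, hq, hql, T, hTq, hT⟩

lemma blockDist_self (x : V) : blockDist G x x = 0 :=
  Nat.le_zero.1 (blockDist_le (S := ∅) .nil (by simp) ⟨by simp, by simp⟩)

lemma blockDist_pos (hG : G.Connected) {x y : V} (hxy : x ≠ y) : 0 < blockDist G x y := by
  obtain ⟨p, -, -, S, hS, hSc⟩ := hG.exists_isBlockCover_card_eq_blockDist x y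
  obtain ⟨e, he, -⟩ := (mem_support_iff_exists_mem_edges_of_not_nil (not_nil_of_ne hxy)).1
    p.start_mem_support
  obtain ⟨H, hH, -⟩ := hS.2 e he
  exact hSc ▸ Finset.card_pos.2 ⟨H, hH⟩

lemma blockDist_eq_zero_iff (hG : G.Connected) {x y : V} : blockDist G x y = 0 ↔ x = y :=
  ⟨fun h => by_contra fun hxy => (blockDist_pos hG hxy).ne' h, fun h => h ▸ blockDist_self x⟩

lemma blockDist_comm (x y : V) : blockDist G x y = blockDist G y x := by
  unfold blockDist
  congr 1
  ext n
  constructor <;> rintro ⟨p, hp, hl, S, hSc, hS⟩ <;>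
    exact ⟨p.reverse, hp.reverse, by rw [length_reverse, hl, dist_comm], S, hSc,
      IsBlockCover.reverse (p := p) hS⟩

lemma blockDist_triangle (hG : G.Connected) (x y z : V) :
    blockDist G x z ≤ blockDist G x y + blockDist G y z := by
  classical
  obtain ⟨p, -, -, S, hS, hSc⟩ := hG.exists_isBlockCover_card_eq_blockDist x y
  obtain ⟨q, -, -, T, hT, hTc⟩ := hG.exists_isBlockCover_card_eq_blockDist y z
  obtain ⟨r, hr, hrl⟩ := hG.exists_path_of_dist x z
  calc blockDist G x z ≤ (S ∪ T).card := blockDist_le hr hrl ((hS.append hT).of_isPath hr)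
    _ ≤ S.card + T.card := Finset.card_union_le S T
    _ = blockDist G x y + blockDist G y z := by rw [hSc, hTc]

end Blocks

/-- For a connected graph `C`, the block distance `d̄_C` is a metric on the vertex set:
it vanishes exactly on the diagonal, is symmetric, and satisfies the triangle
inequality. -/
theorem blockDist_is_metric {V : Type*} (G : SimpleGraph V) (hG : G.Connected) :
    (∀ x y : V, blockDist G x y = 0 ↔ x = y) ∧
    (∀ x y : V, blockDist G x y = blockDist G y x) ∧
    (∀ x y z : V, blockDist G x z ≤ blockDist G x y + blockDist G y z) :=
  ⟨fun _ _ => blockDist_eq_zero_iff hG, blockDist_comm, blockDist_triangle hG⟩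
end

section
/- Let (Xᵢ) be i.i.d. real random variables with mean 0 such that 𝔼[e^{θX}] < ∞ for all |θ| < δ for some δ > 0, and let Sₙ = X₁ + ⋯ + Xₙ. Then there is c > 0 such that for every p with 1/2 < p < 1 there exists N so that for all n ≥ N and 0 < ε < 1: ℙ(|Sₙ| ≥ ε nᵖ) ≤ 2 exp(−c ε² n^{2p−1}). -/
/-!
The moment generating function of `X 0` is analytic at `0`, where it equals `1` and has derivative
`𝔼[X 0] = 0`; Taylor's formula therefore gives `mgf t ≤ exp (K t²)` for `|t|` small. By independence
the mgf of `Sₙ` is then at most `exp (n K t²)`, and the Chernoff bound at `t = a / (2 n K)` gives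
`ℙ(|Sₙ| ≥ a) ≤ 2 exp (-a² / (4 n K))`. For `a = ε nᵖ` this `t` equals `ε n^(p-1) / (2K)`, which tends
to `0` because `p < 1`, so it lies in the region where the local bound holds once `n` is large.
-/

open MeasureTheory ProbabilityTheory
open scoped ENNReal NNReal

open Real Filter Topology Finset

namespace ProbabilityTheory

variable {Ω : Type*} {mΩ : MeasurableSpace Ω} {μ : Measure Ω}

theorem exists_mgf_le_exp_mul_sq [IsProbabilityMeasure μ] {X : Ω → ℝ}
    (h0 : 0 ∈ interior (integrableExpSet X μ)) (hX : μ[X] = 0) :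
    ∃ K > 0, ∀ᶠ t in 𝓝 0, mgf X μ t ≤ exp (K * t ^ 2) := by
  have hTaylor := (hasFPowerSeriesAt_mgf h0).isBigO_sub_partialSum_pow 2
  -- the Taylor polynomial of degree `1` is `1 + μ[X] * t = 1`
  simp only [zero_add, FormalMultilinearSeries.partialSum, zero_mul, exp_zero, mul_one,
    FormalMultilinearSeries.apply_eq_prod_smul_coeff, Finset.prod_const, Finset.card_univ,
    Fintype.card_fin, FormalMultilinearSeries.coeff_ofScalars, smul_eq_mul, sum_range_succ,
    range_one, sum_singleton, pow_zero, integral_const, probReal_univ, Nat.factorial_zero,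
    Nat.cast_one, div_one, pow_one, hX, Nat.factorial_one, mul_zero, add_zero, norm_eq_abs,
    sq_abs] at hTaylor
  obtain ⟨c, hc⟩ := hTaylor.bound
  refine ⟨max c 1, by positivity, ?_⟩
  filter_upwards [hc] with t ht
  rw [norm_eq_abs, norm_of_nonneg (sq_nonneg t)] at ht
  calc mgf X μ t ≤ 1 + max c 1 * t ^ 2 := by
        nlinarith [le_abs_self (mgf X μ t - 1), le_max_left c 1, sq_nonneg t]
    _ ≤ exp (max c 1 * t ^ 2) := by linarith [add_one_le_exp (max c 1 * t ^ 2)]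

theorem measureReal_ge_le_exp_of_mgf_le [IsFiniteMeasure μ] {S : Ω → ℝ} {K a : ℝ}
    (hK : 0 < K) (ha : 0 ≤ a) (h_int : Integrable (fun ω ↦ exp (a / (2 * K) * S ω)) μ)
    (h_mgf : mgf S μ (a / (2 * K)) ≤ exp (K * (a / (2 * K)) ^ 2)) :
    μ.real {ω | a ≤ S ω} ≤ exp (-a ^ 2 / (4 * K)) :=
  calc μ.real {ω | a ≤ S ω} ≤ exp (-(a / (2 * K)) * a) * mgf S μ (a / (2 * K)) :=
        measure_ge_le_exp_mul_mgf a (by positivity) h_int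
    _ ≤ exp (-(a / (2 * K)) * a) * exp (K * (a / (2 * K)) ^ 2) := by gcongr
    _ = exp (-a ^ 2 / (4 * K)) := by rw [← exp_add]; congr 1; field_simp; ring

theorem measure_abs_ge_le_of_mgf_le [IsFiniteMeasure μ] {S : Ω → ℝ} {K a : ℝ}
    (hK : 0 < K) (ha : 0 ≤ a)
    (h : ∀ t, |t| ≤ a / (2 * K) →
      Integrable (fun ω ↦ exp (t * S ω)) μ ∧ mgf S μ t ≤ exp (K * t ^ 2)) :
    μ {ω | a ≤ |S ω|} ≤ ENNReal.ofReal (2 * exp (-a ^ 2 / (4 * K))) := by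
  have hs : |a / (2 * K)| ≤ a / (2 * K) := (abs_of_nonneg (by positivity)).le
  have hs' : |-(a / (2 * K))| ≤ a / (2 * K) := by rwa [abs_neg]
  have upper := measureReal_ge_le_exp_of_mgf_le hK ha (h _ hs).1 (h _ hs).2
  have lower : μ.real {ω | a ≤ (-S) ω} ≤ exp (-a ^ 2 / (4 * K)) := by
    refine measureReal_ge_le_exp_of_mgf_le hK ha ?_ ?_
    · simpa only [Pi.neg_apply, mul_neg, neg_mul] using (h _ hs').1
    · simpa only [mgf_neg, neg_sq] using (h _ hs').2
  have hsplit : {ω | a ≤ |S ω|} = {ω | a ≤ S ω} ∪ {ω | a ≤ (-S) ω} := by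
    ext ω; exact le_abs (a := a) (b := S ω)
  rw [ENNReal.le_ofReal_iff_toReal_le (measure_ne_top _ _) (by positivity), hsplit, two_mul]
  exact (measureReal_union_le _ _).trans (add_le_add upper lower)

theorem mgf_sum_range_le_of_identDistrib {X : ℕ → Ω → ℝ} (hmeas : ∀ i, Measurable (X i))
    (hindep : iIndepFun X μ) (hident : ∀ i, IdentDistrib (X i) (X 0) μ μ) {K t : ℝ}
    (hX : mgf (X 0) μ t ≤ exp (K * t ^ 2)) (n : ℕ) :
    mgf (∑ i ∈ range n, X i) μ t ≤ exp (n * K * t ^ 2) := by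
  rw [hindep.mgf_sum hmeas, prod_congr rfl fun i _ ↦ mgf_congr_of_identDistrib _ _ (hident i) t,
    prod_const, card_range, mul_assoc, exp_nat_mul]
  exact pow_le_pow_left₀ mgf_nonneg hX n

theorem measure_abs_sum_range_ge_le_of_identDistrib [IsProbabilityMeasure μ] {X : ℕ → Ω → ℝ}
    (hmeas : ∀ i, Measurable (X i)) (hindep : iIndepFun X μ)
    (hident : ∀ i, IdentDistrib (X i) (X 0) μ μ) {K η a : ℝ} (hK : 0 < K) (ha : 0 ≤ a)
    (hloc : ∀ t, |t| < η → t ∈ integrableExpSet (X 0) μ ∧ mgf (X 0) μ t ≤ exp (K * t ^ 2))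
    {n : ℕ} (hn : 0 < n) (haη : a / (2 * (n * K)) < η) :
    μ {ω | a ≤ |∑ i ∈ range n, X i ω|} ≤ ENNReal.ofReal (2 * exp (-a ^ 2 / (4 * (n * K)))) := by
  simp only [← Finset.sum_apply]
  refine measure_abs_ge_le_of_mgf_le (by positivity) ha fun t ht ↦ ?_
  obtain ⟨hint, hmgf⟩ := hloc t (ht.trans_lt haη)
  refine ⟨hindep.integrable_exp_mul_sum hmeas fun i _ ↦ ?_,
    mgf_sum_range_le_of_identDistrib hmeas hindep hident hmgf n⟩
  exact ((hident i).comp (measurable_const_mul t).exp).integrable_iff.2 hint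

theorem zero_mem_interior_integrableExpSet {X : Ω → ℝ} (hX : Measurable X) {δ : ℝ} (hδ : 0 < δ)
    (h : ∀ θ, |θ| < δ → ∫⁻ ω, ENNReal.ofReal (exp (θ * X ω)) ∂μ < ∞) :
    0 ∈ interior (integrableExpSet X μ) := by
  refine mem_interior.2 ⟨Set.Ioo (-δ) δ, fun θ hθ ↦ ?_, isOpen_Ioo, neg_lt_zero.2 hδ, hδ⟩
  exact ⟨(hX.const_mul θ).exp.aestronglyMeasurable,
    (hasFiniteIntegral_iff_ofReal (ae_of_all _ fun ω ↦ (exp_pos _).le)).2 (h θ (abs_lt.2 hθ))⟩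

theorem eventually_natCast_rpow_lt {q b : ℝ} (hq : q < 0) (hb : 0 < b) :
    ∀ᶠ n : ℕ in atTop, (n : ℝ) ^ q < b := by
  have h := (tendsto_rpow_neg_atTop (neg_pos.2 hq)).comp tendsto_natCast_atTop_atTop
  rw [neg_neg] at h
  exact h.eventually_lt_const hb

end ProbabilityTheory

/-- Moderate deviations for one-dimensional random walk: if `(Xᵢ)` are i.i.d., centered,
with finite exponential moments in a neighbourhood of `0`, then there is `c > 0` such
that for every `1/2 < p < 1` there is `N` with
`ℙ(|Sₙ| ≥ ε nᵖ) ≤ 2 exp(-c ε² n^(2p-1))` for all `n ≥ N` and `0 < ε < 1`. -/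
theorem moderate_deviations
    {Ω : Type*} [MeasureSpace Ω] [IsProbabilityMeasure (ℙ : Measure Ω)]
    (X : ℕ → Ω → ℝ)
    (hmeas : ∀ i, Measurable (X i))
    (hindep : iIndepFun X ℙ)
    (hident : ∀ i, Measure.map (X i) ℙ = Measure.map (X 0) ℙ)
    (hmean : ∫ ω, X 0 ω ∂ℙ = 0)
    (δ : ℝ) (hδ : 0 < δ)
    (hexp : ∀ θ : ℝ, |θ| < δ →
      ∫⁻ ω, ENNReal.ofReal (Real.exp (θ * X 0 ω)) ∂ℙ < ∞) :
    ∃ c > (0:ℝ), ∀ p : ℝ, 1/2 < p → p < 1 → ∃ N : ℕ, ∀ n ≥ N, ∀ ε : ℝ,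
      0 < ε → ε < 1 →
      ℙ {ω | ε * (n : ℝ) ^ p ≤ |∑ i ∈ Finset.range n, X i ω|} ≤
        ENNReal.ofReal (2 * Real.exp (-c * ε ^ 2 * (n : ℝ) ^ (2 * p - 1))) := by
  have h0 := zero_mem_interior_integrableExpSet (hmeas 0) hδ hexp
  obtain ⟨K, hK, hmgf⟩ := exists_mgf_le_exp_mul_sq h0 hmean
  obtain ⟨η, hη, hloc⟩ :=
    Metric.eventually_nhds_iff.1 (Filter.Eventually.and (mem_interior_iff_mem_nhds.1 h0) hmgf)
  refine ⟨1 / (4 * K), by positivity, fun p hp₁ hp₂ ↦ ?_⟩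
  obtain ⟨N, hN⟩ := eventually_atTop.1 ((eventually_natCast_rpow_lt (by linarith : p - 1 < 0)
    (by positivity : 0 < 2 * K * η)).and (eventually_ge_atTop 1))
  refine ⟨N, fun n hn ε hε₀ hε₁ ↦ ?_⟩
  obtain ⟨hnp, hn₁⟩ := hN n hn
  have hn₀ : (0 : ℝ) < n := by exact_mod_cast hn₁
  have hsplit : (n : ℝ) ^ p = n ^ (p - 1) * n := by
    rw [rpow_sub_one hn₀.ne', div_mul_cancel₀ _ hn₀.ne']
  have haη : ε * n ^ p / (2 * (n * K)) < η := by
    rw [hsplit, div_lt_iff₀ (by positivity)]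
    have := rpow_pos_of_pos hn₀ (p - 1)
    nlinarith [mul_pos (mul_pos (sub_pos.2 hε₁) this) hn₀, mul_pos (sub_pos.2 hnp) hn₀]
  have hsq : ((n : ℝ) ^ p) ^ 2 = n ^ (2 * p - 1) * n := by
    rw [rpow_sub_one hn₀.ne', div_mul_cancel₀ _ hn₀.ne', ← rpow_mul_natCast hn₀.le, mul_comm]
    norm_num
  refine (measure_abs_sum_range_ge_le_of_identDistrib hmeas hindep
    (fun i ↦ ⟨(hmeas i).aemeasurable, (hmeas 0).aemeasurable, hident i⟩) hK (by positivity)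
    (fun t ht ↦ @hloc t (by simpa using ht)) hn₁ haη).trans_eq ?_
  rw [mul_pow, hsq]
  field_simp
end

section
/- Let B(z) and C(z) be formal power series with nonnegative coefficients, C(0)=0, satisfying the block-decomposition equation C•(z) = z·exp(B'(C•(z))), where C•(z) = z·C'(z). Assume B has at least one nonzero coefficient of degree ≥ 2 (i.e., B' ≠ 0). If C has finite positive radius of convergence ρ, then y := C•(ρ) < ∞ and λ := B'(y) < ∞, and y = ρ·exp(λ). -/
/-!
Pick `0 < u₀ < u₁ < ⋯ ↑ ρ`. Since `C•` is a derivative of `C`, it is finite strictly inside the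
disc of convergence. A nonzero term `a tᵐ` (`m ≥ 1`) of `B'` gives `e^{B'(y)} ≥ (a y)² / 2` for
`y ≥ 1`, so the equation `y = x e^{B'(y)}` forces `y ≤ max 1 (2 / (x a²))`: the values `C•(uₖ)`
are bounded uniformly in `k`. All functions involved are power series with nonnegative
coefficients, hence commute with suprema of increasing sequences, so the bound and the equation
pass to `x = ρ`; finiteness of `λ = B'(y)` then follows from `λ ≤ e^λ = y / ρ`.
-/

open scoped ENNReal

noncomputable def eexp (t : ℝ≥0∞) : ℝ≥0∞ := ∑' k : ℕ, t ^ k / (k.factorial : ℝ≥0∞)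

lemma natCast_mul_pow_mul_le {R : Type*} [CommSemiring R] [LinearOrder R] [IsOrderedRing R]
    [ExistsAddOfLE R] {x d : R} (hx : 0 ≤ x) (hd : 0 ≤ d) (n : ℕ) :
    n * x ^ n * d ≤ x * (x + d) ^ n := by
  rcases n with _ | n
  · simpa using hx
  · have bernoulli :=
      pow_add_mul_le_add_pow hx (add_nonneg (mul_nonneg zero_le_two hx) hd) (n + 1)
    rw [Nat.add_sub_cancel] at bernoulli
    calc ((n + 1 : ℕ) : R) * x ^ (n + 1) * d = x * ((n + 1 : ℕ) * x ^ n * d) := by ring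
      _ ≤ x * (x + d) ^ (n + 1) :=
        mul_le_mul_of_nonneg_left ((le_add_of_nonneg_left (pow_nonneg hx _)).trans bernoulli) hx

namespace ENNReal

lemma iSup_mul_iSup_of_monotone {ι : Type*} [Preorder ι] [IsDirectedOrder ι] {f g : ι → ℝ≥0∞}
    (hf : Monotone f) (hg : Monotone g) : iSup f * iSup g = ⨆ i, f i * g i := by
  refine le_antisymm ?_ iSup_mul_le
  simp only [ENNReal.iSup_mul, ENNReal.mul_iSup]
  refine iSup₂_le fun j i => ?_
  obtain ⟨k, hik, hjk⟩ := exists_ge_ge i j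
  exact le_iSup_of_le k (mul_le_mul' (hf hik) (hg hjk))

lemma tsum_iSup_of_monotone {α ι : Type*} [Preorder ι] [IsDirectedOrder ι]
    {f : α → ι → ℝ≥0∞} (hf : ∀ a, Monotone (f a)) :
    ∑' a, ⨆ i, f a i = ⨆ i, ∑' a, f a i := by
  refine le_antisymm ?_ (iSup_le fun i => ENNReal.tsum_le_tsum fun a => le_iSup (f a) i)
  rw [ENNReal.tsum_eq_iSup_sum]
  refine iSup_le fun s => ?_
  rw [ENNReal.finsetSum_iSup_of_monotone hf]
  exact iSup_mono fun i => ENNReal.sum_le_tsum s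

lemma tsum_natCast_mul_mul_pow_lt_top {c : ℕ → ℝ≥0∞} {x x' : ℝ≥0∞} (hxx' : x < x')
    (hx' : x' ≠ ∞) (h : ∑' n : ℕ, c n * x' ^ n < ∞) : ∑' n : ℕ, (n : ℝ≥0∞) * c n * x ^ n < ∞ := by
  set d := x' - x
  have hd0 : d ≠ 0 := (tsub_pos_of_lt hxx').ne'
  have hdtop : d ≠ ∞ := ne_top_of_le_ne_top hx' tsub_le_self
  have hx'_eq : x + d = x' := add_tsub_cancel_of_le hxx'.le
  have hterm : ∀ n : ℕ, (n : ℝ≥0∞) * c n * x ^ n ≤ x / d * (c n * x' ^ n) := fun n => by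
    have hpow : (n : ℝ≥0∞) * x ^ n ≤ x * x' ^ n / d :=
      (ENNReal.le_div_iff_mul_le (.inl hd0) (.inl hdtop)).2
        (hx'_eq ▸ natCast_mul_pow_mul_le zero_le zero_le n)
    calc (n : ℝ≥0∞) * c n * x ^ n = c n * ((n : ℝ≥0∞) * x ^ n) := by ring
      _ ≤ c n * (x * x' ^ n / d) := by gcongr
      _ = x / d * (c n * x' ^ n) := by rw [ENNReal.mul_div_right_comm]; ring
  calc ∑' n : ℕ, (n : ℝ≥0∞) * c n * x ^ n ≤ ∑' n : ℕ, x / d * (c n * x' ^ n) :=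
        ENNReal.tsum_le_tsum hterm
    _ = x / d * ∑' n : ℕ, c n * x' ^ n := ENNReal.tsum_mul_left
    _ < ∞ := ENNReal.mul_lt_top (ENNReal.div_lt_top (ne_top_of_lt hxx') hd0) h

section PowerSeries

variable {F : ℝ≥0∞ → ℝ≥0∞} {a : ℕ → ℝ≥0∞}

lemma monotone_of_eq_tsum_mul_pow (hF : ∀ x, F x = ∑' n, a n * x ^ n) : Monotone F :=
  fun x y hxy => by
    simp only [hF]
    exact ENNReal.tsum_le_tsum fun n => by gcongr

lemma map_iSup_of_eq_tsum_mul_pow (hF : ∀ x, F x = ∑' n, a n * x ^ n) {y : ℕ → ℝ≥0∞}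
    (hy : Monotone y) : F (⨆ k, y k) = ⨆ k, F (y k) := by
  simp only [hF, ENNReal.iSup_pow, ENNReal.mul_iSup]
  exact tsum_iSup_of_monotone fun n i j hij => by gcongr; exact hy hij

end PowerSeries

end ENNReal

open ENNReal

lemma pow_div_factorial_le_eexp (t : ℝ≥0∞) (k : ℕ) : t ^ k / k.factorial ≤ eexp t :=
  ENNReal.le_tsum (f := fun k : ℕ => t ^ k / (k.factorial : ℝ≥0∞)) k

lemma le_eexp (t : ℝ≥0∞) : t ≤ eexp t := by
  simpa using pow_div_factorial_le_eexp t 1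

lemma eexp_eq_tsum (t : ℝ≥0∞) : eexp t = ∑' n : ℕ, (n.factorial : ℝ≥0∞)⁻¹ * t ^ n := by
  simp only [eexp, div_eq_mul_inv, mul_comm]

lemma le_max_of_eq_mul_eexp {x y t a : ℝ≥0∞} {m : ℕ} (hm : m ≠ 0) (hy : y ≠ ∞)
    (hyt : a * y ^ m ≤ t) (h : y = x * eexp t) : y ≤ max 1 (2 / (x * a ^ 2)) := by
  rcases le_or_gt y 1 with hy1 | hy1
  · exact le_max_of_le_left hy1
  refine le_max_of_le_right
    ((ENNReal.le_div_iff_mul_le (.inr two_ne_zero) (.inr ofNat_ne_top)).2 ?_)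
  have hay : a * y ≤ t := le_trans (by gcongr; exact le_self_pow₀ hy1.le hm) hyt
  have hsq : x * a ^ 2 * y * y ≤ 2 * y :=
    calc x * a ^ 2 * y * y = 2 * (x * ((a * y) ^ 2 / 2)) := by
          rw [mul_left_comm, ENNReal.mul_div_cancel two_ne_zero ofNat_ne_top]; ring
      _ ≤ 2 * (x * (t ^ 2 / 2)) := by gcongr
      _ ≤ 2 * y := by
          rw [h]; gcongr; simpa using pow_div_factorial_le_eexp t 2
  rw [mul_comm y]
  exact (ENNReal.mul_le_mul_iff_left (zero_lt_one.trans hy1).ne' hy).1 hsq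

theorem singular_constants_finite_general
    (b c : ℕ → ℝ≥0∞)
    (hb : ∃ n, 2 ≤ n ∧ b n ≠ 0)
    (ρ : ℝ≥0∞) (hρ0 : 0 < ρ) (hρfin : ρ < ∞)
    (Cdot : ℝ≥0∞ → ℝ≥0∞)
    (hCdot : ∀ x, Cdot x = ∑' n : ℕ, (n : ℝ≥0∞) * c n * x ^ n)
    (Bp : ℝ≥0∞ → ℝ≥0∞)
    (hBp : ∀ t, Bp t = ∑' n : ℕ, ((n : ℝ≥0∞) + 1) * b (n + 1) * t ^ n)
    (hrad₁ : ∀ x, x < ρ → (∑' n : ℕ, c n * x ^ n) < ∞)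
    (heq : ∀ x, x < ρ → Cdot x = x * eexp (Bp (Cdot x))) :
    Cdot ρ < ∞ ∧ Bp (Cdot ρ) < ∞ ∧ Cdot ρ = ρ * eexp (Bp (Cdot ρ)) := by
  obtain ⟨m, hm, a, ha, hBp_ge⟩ : ∃ m ≠ 0, ∃ a ≠ 0, ∀ t, a * t ^ m ≤ Bp t := by
    obtain ⟨n, hn, hbn⟩ := hb
    refine ⟨n - 1, by omega, ((n - 1 : ℕ) + 1) * b (n - 1 + 1), ?_, fun t => ?_⟩
    · rw [Nat.sub_add_cancel (by omega : 1 ≤ n)]; simpa using hbn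
    · rw [hBp]; exact ENNReal.le_tsum (n - 1)
  obtain ⟨u, hu_mono, hu_mem, hu_lim⟩ := exists_seq_strictMono_tendsto' hρ0
  have hu_sup : ⨆ k, u k = ρ := iSup_eq_of_tendsto hu_mono.monotone hu_lim
  have hC_mono : Monotone (Cdot ∘ u) :=
    (monotone_of_eq_tsum_mul_pow hCdot).comp hu_mono.monotone
  have hB_mono : Monotone (Bp ∘ Cdot ∘ u) := (monotone_of_eq_tsum_mul_pow hBp).comp hC_mono
  have hC_sup : Cdot ρ = ⨆ k, Cdot (u k) :=
    hu_sup ▸ map_iSup_of_eq_tsum_mul_pow hCdot hu_mono.monotone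
  have hB_sup : Bp (Cdot ρ) = ⨆ k, Bp (Cdot (u k)) :=
    hC_sup ▸ map_iSup_of_eq_tsum_mul_pow hBp hC_mono
  have hE_sup : eexp (Bp (Cdot ρ)) = ⨆ k, eexp (Bp (Cdot (u k))) :=
    hB_sup ▸ map_iSup_of_eq_tsum_mul_pow eexp_eq_tsum hB_mono
  have h_eq : Cdot ρ = ρ * eexp (Bp (Cdot ρ)) :=
    calc Cdot ρ = ⨆ k, u k * eexp (Bp (Cdot (u k))) :=
          hC_sup.trans (iSup_congr fun k => heq _ (hu_mem k).2)
      _ = (⨆ k, u k) * ⨆ k, eexp (Bp (Cdot (u k))) := (iSup_mul_iSup_of_monotone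
          hu_mono.monotone ((monotone_of_eq_tsum_mul_pow eexp_eq_tsum).comp hB_mono)).symm
      _ = ρ * eexp (Bp (Cdot ρ)) := by rw [hu_sup, hE_sup]
  have h_fin : Cdot ρ < ∞ := by
    have hM : 2 / (u 0 * a ^ 2) ≠ ∞ :=
      (ENNReal.div_lt_top ofNat_ne_top (mul_ne_zero (hu_mem 0).1.ne' (pow_ne_zero 2 ha))).ne
    refine hC_sup ▸ (iSup_le fun k => ?_).trans_lt (max_lt one_lt_top hM.lt_top)
    obtain ⟨x', hx', hx'ρ⟩ := exists_between (hu_mem k).2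
    have hCk : Cdot (u k) ≠ ∞ := (hCdot _ ▸ tsum_natCast_mul_mul_pow_lt_top hx'
      (hx'ρ.trans hρfin).ne (hrad₁ x' hx'ρ)).ne
    refine (le_max_of_eq_mul_eexp hm hCk (hBp_ge _) (heq _ (hu_mem k).2)).trans ?_
    gcongr
    exact hu_mono.monotone (Nat.zero_le k)
  refine ⟨h_fin, ?_, h_eq⟩
  exact (le_eexp _).trans_lt (lt_top_of_mul_ne_top_right (h_eq ▸ h_fin.ne) hρ0.ne')

/-- Finiteness of the singular constants for block-stable graph classes.  Let `c` be the
(nonnegative) coefficient sequence of `C(z)` with `c 0 = 0`, let `b` be that of `B(z)`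
with some nonzero coefficient of degree at least `2`, write `Cdot` for the series
`C•(z) = z C'(z)` and `Bp` for `B'(z)`, and suppose the block-decomposition equation
`C•(x) = x · exp(B'(C•(x)))` holds strictly below the radius of convergence `ρ` of `C`,
with `0 < ρ < ∞`.  Then `y = C•(ρ)` and `λ = B'(y)` are finite and `y = ρ e^λ`. -/
theorem singular_constants_finite
    (b c : ℕ → ℝ≥0∞) (hc0 : c 0 = 0)
    (hb : ∃ n, 2 ≤ n ∧ b n ≠ 0)
    (ρ : ℝ≥0∞) (hρ0 : 0 < ρ) (hρfin : ρ < ∞)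
    (Cdot : ℝ≥0∞ → ℝ≥0∞)
    (hCdot : ∀ x, Cdot x = ∑' n : ℕ, (n : ℝ≥0∞) * c n * x ^ n)
    (Bp : ℝ≥0∞ → ℝ≥0∞)
    (hBp : ∀ t, Bp t = ∑' n : ℕ, ((n : ℝ≥0∞) + 1) * b (n + 1) * t ^ n)
    (hrad₁ : ∀ x, x < ρ → (∑' n : ℕ, c n * x ^ n) < ∞)
    (hrad₂ : ∀ x, ρ < x → (∑' n : ℕ, c n * x ^ n) = ∞)
    (heq : ∀ x, x < ρ → Cdot x = x * eexp (Bp (Cdot x))) :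
    Cdot ρ < ∞ ∧ Bp (Cdot ρ) < ∞ ∧ Cdot ρ = ρ * eexp (Bp (Cdot ρ)) :=
  singular_constants_finite_general b c hb ρ hρ0 hρfin Cdot hCdot Bp hBp hrad₁ heq
end

section
/- Let T be a rooted plane tree with n vertices and let v₀, …, v_{n−1} be its vertices in lexicographic (depth-first) order. Define the DFS queue process by Q₀ = 1 and Qᵢ = Q_{i−1} − 1 + d⁺(v_{i−1}), where d⁺ is the out-degree. Then for each 0 ≤ j ≤ n−1, if v = v_j and v' is the same vertex at position k in the reverse (mirror-image) DFS order with queue process Q^r, one has Q_j + Q^r_k = 2 + Σ_{u ≻ v} d⁺(u) − h(v), where the sum ranges over the strict ancestors u of v and h(v) is the height of v. -/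
/-!
Induct on the address `v = i :: p`, passing to the `i`-th subtree `c` of the root, which has
`d` children. In lexicographic order `i :: p` is preceded by the root, by the whole subtrees of
the first `i` children, each of which contributes `Σ (d⁺ - 1) = -1` since it is a tree, and by
the predecessors of `p` in `c`; hence `Q(i :: p) = Q_c(p) + d - 1 - i`. In the mirror image the
same vertex sits below the child with index `d - 1 - i`, so the two queues together gain `d - 1`.
The ancestor sum gains `d` and the height gains `1`, so the identity passes from `p` to `i :: p`.
-/

open scoped Classical

/-- A plane tree: a rooted tree with an ordered list of subtrees at every vertex. -/
inductive PlaneTree where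
  | node : List PlaneTree → PlaneTree

namespace PlaneTree

/-- The list of subtrees dangling from the root. -/
def children : PlaneTree → List PlaneTree
  | node cs => cs

/-- The subtree at an Ulam–Harris address, if it exists. -/
def get : List ℕ → PlaneTree → Option PlaneTree
  | [], t => some t
  | i :: p, t => (t.children[i]?).bind (get p)

/-- The out-degree of the vertex at address `p` (or `0` if there is no such vertex). -/
def degAt (t : PlaneTree) (p : List ℕ) : ℕ :=
  match get p t with
  | some s => s.children.length
  | none => 0

/-- The mirror image of a plane tree: every offspring list is reversed. -/
def mirror : PlaneTree → PlaneTree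
  | node cs => node ((cs.attach.map fun c => mirror c.1).reverse)
  decreasing_by
    have := List.sizeOf_lt_of_mem c.2
    simp only [PlaneTree.node.sizeOf_spec]
    omega

/-- The address in the mirror image corresponding to the address `p` in `t`. -/
def mirrorAddr : List ℕ → PlaneTree → List ℕ
  | [], _ => []
  | i :: p, t =>
      (t.children.length - 1 - i) ::
        (match t.children[i]? with
         | some c => mirrorAddr p c
         | none => p)

/-- The lexicographic depth-first-search queue value at the vertex `v` of `t`:
`Q_j = 1 + Σ_{i<j} (d⁺(v_i) - 1)`, the sum ranging over the vertices strictly preceding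
`v` in depth-first (lexicographic) order.  Here `V` is the set of (Ulam–Harris addresses
of) vertices of `t`. -/
noncomputable def queueAt (t : PlaneTree) (V : Finset (List ℕ)) (v : List ℕ) : ℤ :=
  1 + ∑ q ∈ V.filter (fun q => List.Lex (· < ·) q v), ((degAt t q : ℤ) - 1)

theorem induction_on_children {P : PlaneTree → Prop}
    (h : ∀ cs, (∀ c ∈ cs, P c) → P (node cs)) (t : PlaneTree) : P t :=
  PlaneTree.rec (motive_1 := P) (motive_2 := fun cs => ∀ c ∈ cs, P c) h
    (fun _ h => absurd h List.not_mem_nil)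
    (fun _ _ hc hcs => List.forall_mem_cons.2 ⟨hc, hcs⟩) t

theorem get_cons_of_getElem? {t c : PlaneTree} {i : ℕ} (p : List ℕ)
    (hc : t.children[i]? = some c) : get (i :: p) t = get p c := by
  rw [get, hc, Option.bind_some]

theorem degAt_nil (t : PlaneTree) : degAt t [] = t.children.length := rfl

theorem degAt_cons {t c : PlaneTree} {i : ℕ} (p : List ℕ) (hc : t.children[i]? = some c) :
    degAt t (i :: p) = degAt c p := by
  rw [degAt, degAt, get_cons_of_getElem? p hc]

theorem children_mirror (t : PlaneTree) :
    (mirror t).children = (t.children.map mirror).reverse := by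
  obtain ⟨cs⟩ := t
  rw [mirror, children, children, List.attach_map_val]

theorem length_children_mirror (t : PlaneTree) :
    (mirror t).children.length = t.children.length := by
  simp [children_mirror]

theorem getElem?_children_mirror {t c : PlaneTree} {i : ℕ} (hc : t.children[i]? = some c) :
    (mirror t).children[t.children.length - 1 - i]? = some (mirror c) := by
  have hi : i < t.children.length := (List.getElem?_eq_some_iff.1 hc).1
  rw [children_mirror, List.getElem?_reverse (by simp; omega), List.length_map,
    show t.children.length - 1 - (t.children.length - 1 - i) = i by omega,
    List.getElem?_map, hc, Option.map_some]

theorem mirrorAddr_cons {t c : PlaneTree} {i : ℕ} (p : List ℕ) (hc : t.children[i]? = some c) :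
    mirrorAddr (i :: p) t = (t.children.length - 1 - i) :: mirrorAddr p c := by
  rw [mirrorAddr, hc]

theorem queueAt_nil (t : PlaneTree) (V : Finset (List ℕ)) : queueAt t V [] = 1 := by
  simp [queueAt, List.not_lex_nil]

def IsVertexSet (t : PlaneTree) (V : Finset (List ℕ)) : Prop :=
  ∀ p, p ∈ V ↔ (get p t).isSome

noncomputable def childVertices (V : Finset (List ℕ)) (i : ℕ) : Finset (List ℕ) :=
  V.preimage (List.cons i) List.cons_injective.injOn

@[simp]
theorem mem_childVertices {V : Finset (List ℕ)} {i : ℕ} {p : List ℕ} :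
    p ∈ childVertices V i ↔ i :: p ∈ V :=
  Finset.mem_preimage

namespace IsVertexSet

variable {t : PlaneTree} {V : Finset (List ℕ)}

theorem nil_mem (hV : IsVertexSet t V) : [] ∈ V :=
  (hV []).2 rfl

theorem exists_child (hV : IsVertexSet t V) {i : ℕ} {p : List ℕ} (h : i :: p ∈ V) :
    ∃ c, t.children[i]? = some c := by
  have h := (hV _).1 h
  rw [get] at h
  exact Option.isSome_iff_exists.1 (Option.isSome_of_isSome_bind h)

theorem child (hV : IsVertexSet t V) {c : PlaneTree} {i : ℕ} (hc : t.children[i]? = some c) :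
    IsVertexSet c (childVertices V i) := fun p => by
  rw [mem_childVertices, hV, get_cons_of_getElem? p hc]

theorem sum_eq_root_add_sum_children {M : Type*} [AddCommMonoid M] (hV : IsVertexSet t V)
    (G : List ℕ → M) :
    ∑ q ∈ V, G q =
      G [] + ∑ i ∈ Finset.range t.children.length, ∑ p ∈ childVertices V i, G (i :: p) := by
  rw [← Finset.add_sum_erase V G hV.nil_mem, Finset.sum_sigma']
  congr 1
  refine Finset.sum_nbij' (fun q => ⟨q.headI, q.tail⟩) (fun x => x.1 :: x.2) ?_ ?_ ?_ ?_ ?_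
  · rintro (_ | ⟨i, p⟩) hq
    · simp at hq
    · obtain ⟨c, hc⟩ := hV.exists_child (Finset.mem_of_mem_erase hq)
      simpa [(List.getElem?_eq_some_iff.1 hc).1] using Finset.mem_of_mem_erase hq
  · rintro ⟨i, p⟩ h
    simp_all
  · rintro (_ | ⟨i, p⟩) hq
    · simp at hq
    · rfl
  · rintro ⟨i, p⟩ _
    rfl
  · rintro (_ | ⟨i, p⟩) hq
    · simp at hq
    · rfl

theorem sum_degAt_sub_one (hV : IsVertexSet t V) : ∑ q ∈ V, ((degAt t q : ℤ) - 1) = -1 := by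
  induction t using induction_on_children generalizing V with
  | h cs ih =>
    have subtree : ∀ j ∈ Finset.range cs.length,
        ∑ p ∈ childVertices V j, ((degAt (node cs) (j :: p) : ℤ) - 1) = -1 := by
      intro j hj
      obtain ⟨c, hc⟩ : ∃ c, cs[j]? = some c :=
        ⟨_, List.getElem?_eq_getElem (Finset.mem_range.1 hj)⟩
      simp only [degAt_cons _ (show (node cs).children[j]? = some c from hc)]
      exact ih c (List.mem_of_getElem? hc) (hV.child hc)
    rw [hV.sum_eq_root_add_sum_children, degAt_nil, children, Finset.sum_congr rfl subtree]
    simp only [Finset.sum_const, Finset.card_range, nsmul_eq_mul, mul_neg_one]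
    ring

theorem queueAt_cons (hV : IsVertexSet t V) {c : PlaneTree} {i : ℕ} (p : List ℕ)
    (hc : t.children[i]? = some c) :
    queueAt t V (i :: p) = queueAt c (childVertices V i) p + t.children.length - 1 - i := by
  have hi : i + 1 ≤ t.children.length := (List.getElem?_eq_some_iff.1 hc).1
  set contribution : ℕ → ℤ := fun j => ∑ r ∈ childVertices V j,
    if List.Lex (· < ·) (j :: r) (i :: p) then (degAt t (j :: r) : ℤ) - 1 else 0
  have before : ∀ j ∈ Finset.range i, contribution j = -1 := by
    intro j hj
    have hj : j < i := Finset.mem_range.1 hj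
    obtain ⟨cj, hcj⟩ : ∃ cj, t.children[j]? = some cj :=
      ⟨_, List.getElem?_eq_getElem (by omega)⟩
    simp only [contribution, List.cons_lex_cons_iff, hj, true_or, if_true, degAt_cons _ hcj]
    exact (hV.child hcj).sum_degAt_sub_one
  have at_i : contribution i = queueAt c (childVertices V i) p - 1 := by
    simp only [contribution, queueAt, List.cons_lex_cons_iff, lt_irrefl, true_and, false_or,
      degAt_cons _ hc, Finset.sum_filter]
    ring
  have after : ∀ j ∈ Finset.Ico (i + 1) t.children.length, contribution j = 0 := by
    intro j hj
    have hj : i < j := (Finset.mem_Ico.1 hj).1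
    refine Finset.sum_eq_zero fun r _ => if_neg ?_
    rw [List.cons_lex_cons_iff]
    omega
  have split : ∑ j ∈ Finset.range t.children.length, contribution j =
      -i + (queueAt c (childVertices V i) p - 1) := by
    rw [← Finset.sum_range_add_sum_Ico _ hi, Finset.sum_range_succ, Finset.sum_congr rfl before,
      at_i, Finset.sum_congr rfl after]
    simp
  rw [queueAt, Finset.sum_filter, hV.sum_eq_root_add_sum_children, if_pos List.Lex.nil,
    degAt_nil, split]
  ring

theorem sum_degAt_strict_prefixes_cons (hV : IsVertexSet t V) {c : PlaneTree} {i : ℕ}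
    (p : List ℕ) (hc : t.children[i]? = some c) :
    ∑ q ∈ V.filter (fun q => q ≠ i :: p ∧ q <+: i :: p), (degAt t q : ℤ) =
      t.children.length +
        ∑ r ∈ (childVertices V i).filter (fun r => r ≠ p ∧ r <+: p), (degAt c r : ℤ) := by
  have hi : i < t.children.length := (List.getElem?_eq_some_iff.1 hc).1
  rw [Finset.sum_filter, hV.sum_eq_root_add_sum_children,
    Finset.sum_eq_single_of_mem i (Finset.mem_range.2 hi),
    if_pos ⟨(List.cons_ne_nil _ _).symm, List.nil_prefix⟩, Finset.sum_filter, degAt_nil]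
  · simp only [degAt_cons _ hc, List.cons_prefix_cons, ne_eq, List.cons.injEq, true_and]
  · intro j _ hji
    refine Finset.sum_eq_zero fun r _ => if_neg ?_
    simp [List.cons_prefix_cons, hji]

end IsVertexSet

end PlaneTree

open PlaneTree

/-- For a plane tree `t` with vertex (address) set `V`, a vertex `v`, and the mirror tree
with vertex set `V'`, the forward DFS queue value at `v` plus the reverse DFS queue value
at the corresponding vertex of the mirror image equals
`2 + Σ_{u ≻ v} d⁺(u) - h(v)`, the sum being over the strict ancestors of `v`. -/
theorem dfs_queue_identity (t : PlaneTree)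
    (V : Finset (List ℕ)) (hV : ∀ p, p ∈ V ↔ (get p t).isSome)
    (V' : Finset (List ℕ)) (hV' : ∀ p, p ∈ V' ↔ (get p (mirror t)).isSome)
    (v : List ℕ) (hv : v ∈ V) :
    queueAt t V v + queueAt (mirror t) V' (mirrorAddr v t) =
      2 + (∑ q ∈ V.filter (fun q => q ≠ v ∧ q <+: v), (degAt t q : ℤ)) - v.length := by
  induction v generalizing t V V' with
  | nil => simp [queueAt_nil, mirrorAddr, List.prefix_nil]
  | cons i p ih =>
    obtain ⟨c, hc⟩ := IsVertexSet.exists_child hV hv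
    have hcm := getElem?_children_mirror hc
    have hi : i < t.children.length := (List.getElem?_eq_some_iff.1 hc).1
    have ih_child := ih c _ (IsVertexSet.child hV hc) _ (IsVertexSet.child hV' hcm)
      (mem_childVertices.2 hv)
    rw [mirrorAddr_cons p hc, IsVertexSet.queueAt_cons hV p hc,
      IsVertexSet.queueAt_cons hV' _ hcm, IsVertexSet.sum_degAt_strict_prefixes_cons hV p hc,
      length_children_mirror, List.length_cons, Nat.cast_succ,
      show ((t.children.length - 1 - i : ℕ) : ℤ) = t.children.length - 1 - i by omega]
    linarith
end

section
/- Let G be a connected rooted graph with root r whose block decomposition gives a rooted tree structure T on V(G) (the enriched tree of the block decomposition). If a is a vertex of T and b a child of a in T, then the graph distance satisfies d_G(a,b) ≤ d⁺_T(a), where d⁺_T(a) is the number of children of a in T. Consequently, for any vertex v, the height of v in G satisfies h_G(v) ≤ Σ_{u ≻ v} d⁺_T(u), summing over ancestors u of v in T. -/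
/-!
A block containing `a` and `b` is a connected induced subgraph, so it contains a path from
`a` to `b`, and such a path visits each of its at most `d⁺_T(a) + 1` vertices at most once.
Chaining these bounds along the ancestor chain of `v` with the triangle inequality for the
extended distance `edist` (which holds without any reachability assumption) bounds the height.
-/

open SimpleGraph Finset

theorem Finset.sum_Icc_one_iterate_succ {α M : Type*} [AddCommMonoid M] (f : α → M) (g : α → α)
    (n : ℕ) (x : α) :
    ∑ i ∈ Icc 1 (n + 1), f (g^[i] x) = f (g x) + ∑ i ∈ Icc 1 n, f (g^[i] (g x)) := by
  induction n with
  | zero => simp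
  | succ n ih =>
    rw [sum_Icc_succ_top (by omega), ih, sum_Icc_succ_top (by omega), add_assoc,
      ← Function.iterate_succ_apply]

namespace SimpleGraph

variable {V : Type*} {G : SimpleGraph V}

theorem edist_lt_card_of_induce_connected {s : Finset V} (hs : (G.induce (s : Set V)).Connected)
    {a b : V} (ha : a ∈ s) (hb : b ∈ s) : G.edist a b < #s := by
  classical
  obtain ⟨p⟩ := hs.preconnected ⟨a, ha⟩ ⟨b, hb⟩
  have hpath : p.toPath.1.length < #s := by
    simpa using p.toPath.2.length_lt
  calc G.edist a b ≤ (p.toPath.1.map (Embedding.induce (s : Set V)).toHom).length := edist_le _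
    _ < #s := by rw [Walk.length_map]; exact_mod_cast hpath

theorem dist_le_of_edist_le {u v : V} {n : ℕ} (h : G.edist u v ≤ n) : G.dist u v ≤ n :=
  ENat.toNat_le_of_le_natCast h

theorem edist_root_le_sum_ancestors (r : V)
    (par : V → V) (dep : V → ℕ) (hdep0 : dep r = 0) (hdep : ∀ v, v ≠ r → dep v = dep (par v) + 1)
    (w : V → ℕ) (hw : ∀ v, v ≠ r → G.edist (par v) v ≤ w (par v)) (v : V) :
    G.edist r v ≤ ∑ i ∈ Icc 1 (dep v), w (par^[i] v) := by
  induction hv : dep v generalizing v with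
  | zero =>
    obtain rfl : v = r := by
      by_contra hvr
      have := hdep v hvr
      omega
    simp
  | succ n ih =>
    have hvr : v ≠ r := by
      rintro rfl
      omega
    have hparent : dep (par v) = n := by
      have := hdep v hvr
      omega
    rw [sum_Icc_one_iterate_succ, Nat.cast_add]
    calc G.edist r v ≤ G.edist r (par v) + G.edist (par v) v := G.edist_triangle
      _ ≤ (∑ i ∈ Icc 1 n, w (par^[i] (par v)) : ℕ) + w (par v) :=
        add_le_add (ih (par v) hparent) (hw v hvr)
      _ = _ := add_comm _ _

end SimpleGraph

theorem enriched_tree_height_bound_general {V : Type*}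
    (G : SimpleGraph V)
    (r : V) (par : V → V) (dep : V → ℕ)
    (hdep0 : dep r = 0)
    (hdep : ∀ v, v ≠ r → dep v = dep (par v) + 1)
    (outdeg : V → ℕ)
    (hblock : ∀ b, b ≠ r → ∃ B : Finset V, par b ∈ B ∧ b ∈ B ∧
      B.card ≤ outdeg (par b) + 1 ∧ (G.induce (↑B : Set V)).Connected) :
    (∀ b, b ≠ r → G.dist (par b) b ≤ outdeg (par b)) ∧
    (∀ v : V, G.dist r v ≤ ∑ i ∈ Finset.Icc 1 (dep v), outdeg (par^[i] v)) := by
  have hstep : ∀ b, b ≠ r → G.edist (par b) b ≤ outdeg (par b) := by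
    intro b hb
    obtain ⟨B, hpar, hb, hcard, hconn⟩ := hblock b hb
    have hlt := edist_lt_card_of_induce_connected hconn hpar hb
    exact Order.le_of_lt_add_one (hlt.trans_le (by exact_mod_cast hcard))
  exact ⟨fun b hb => dist_le_of_edist_le (hstep b hb), fun v => dist_le_of_edist_le
    (edist_root_le_sum_ancestors r par dep hdep0 hdep outdeg hstep v)⟩

/-- Enriched-tree distance bound.  Let `G` be a connected rooted graph with root `r` and
let `T` be a rooted tree structure on the vertices of `G` given by a parent function
`par` and a depth function `dep` (the enriched tree of the block decomposition): for each
non-root vertex `b`, the vertex `b` and its parent `par b` lie in a common block, i.e. a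
connected induced subgraph with at most `d⁺_T(par b) + 1` vertices, where `d⁺_T a` is the
number of children of `a` in `T`.  Then `d_G(par b, b) ≤ d⁺_T(par b)` for every non-root
vertex `b`, and consequently the height of any vertex `v` in `G` is at most the sum of
the out-degrees of the strict ancestors of `v` in `T`. -/
theorem enriched_tree_height_bound {V : Type*} [Fintype V]
    (G : SimpleGraph V) (hG : G.Connected)
    (r : V) (par : V → V) (dep : V → ℕ)
    (hr : par r = r) (hdep0 : dep r = 0)
    (hdep : ∀ v, v ≠ r → dep v = dep (par v) + 1)
    (outdeg : V → ℕ)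
    (houtdeg : ∀ a, outdeg a = Nat.card {b : V | b ≠ r ∧ par b = a})
    (hblock : ∀ b, b ≠ r → ∃ B : Finset V, par b ∈ B ∧ b ∈ B ∧
      B.card ≤ outdeg (par b) + 1 ∧ (G.induce (↑B : Set V)).Connected) :
    (∀ b, b ≠ r → G.dist (par b) b ≤ outdeg (par b)) ∧
    (∀ v : V, G.dist r v ≤ ∑ i ∈ Finset.Icc 1 (dep v), outdeg (par^[i] v)) :=
  enriched_tree_height_bound_general G r par dep hdep0 hdep outdeg hblock
end
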